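/- arXiv:2007.02506 — 10 statements merged into one kernel-verified Lean document; each statement's English description precedes it below -/
import Mathlib

section
/- Let A₁, A₂, A₃ be algebras over a field k such that (A₁, A₂), (A₁, A₃), (A₂, A₃) are Dorroh pairs of algebras, A₃ is both an A₁-A₂-bimodule and an A₂-A₁-bimodule (with actions given by the various module structures), and a₁(a₂a₃) = (a₁a₂)a₃, a₂(a₁a₃) = (a₂a₁)a₃, (a₃a₂)a₁ = a₃(a₂a₁), (a₃a₁)a₂ = a₃(a₁a₂) for all aᵢ ∈ Aᵢ. Then (A₁⋉_d A₂, A₃) and (A₁, A₂⋉_d A₃) are Dorroh pairs of algebras (with the componentwise actions), and the map ((a₁,a₂),a₃) ↦ (a₁,(a₂,a₃)) is an algebra isomorphism (A₁⋉_d A₂)⋉_d A₃ ≅ A₁⋉_d(A₂⋉_d A₃). -/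
/-! Expanding bilinearly, every axiom of the pairs `(A₁ ⋉_d A₂, A₃)` and `(A₁, A₂ ⋉_d A₃)` splits
into axioms of the three given pairs and the six mixed bimodule and associativity conditions.
Under `((a₁, a₂), a₃) ↦ (a₁, (a₂, a₃))` both iterated products expand into the same nine
summands `aᵢbⱼ`. -/

section

variable {k : Type} [Field k]

/-- A map is `k`-bilinear. -/
def Bilin2 {M N P : Type} [AddCommGroup M] [Module k M] [AddCommGroup N] [Module k N]
    [AddCommGroup P] [Module k P] (f : M → N → P) : Prop :=
  (∀ x x' y, f (x + x') y = f x y + f x' y) ∧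
  (∀ (c : k) x y, f (c • x) y = c • f x y) ∧
  (∀ x y y', f x (y + y') = f x y + f x y') ∧
  (∀ (c : k) x y, f x (c • y) = c • f x y)

/-- `m` is the multiplication of an associative (not necessarily unital) `k`-algebra. -/
def IsAlgMul {A : Type} [AddCommGroup A] [Module k A] (m : A → A → A) : Prop :=
  Bilin2 (k := k) m ∧ ∀ x y z, m (m x y) z = m x (m y z)

/-- `(A, I)` with multiplications `mA`, `mI` and actions `l`, `r` is a Dorroh pair of
algebras: `I` is an `A`-bimodule whose actions are compatible with the multiplication
of `I`. -/
def IsDorrohPairA {A I : Type} [AddCommGroup A] [Module k A] [AddCommGroup I] [Module k I]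
    (mA : A → A → A) (mI : I → I → I) (l : A → I → I) (r : I → A → I) : Prop :=
  IsAlgMul (k := k) mA ∧ IsAlgMul (k := k) mI ∧
  Bilin2 (k := k) l ∧ Bilin2 (k := k) r ∧
  (∀ a b x, l (mA a b) x = l a (l b x)) ∧
  (∀ x a b, r x (mA a b) = r (r x a) b) ∧
  (∀ a x b, r (l a x) b = l a (r x b)) ∧
  (∀ a x y, l a (mI x y) = mI (l a x) y) ∧
  (∀ x a y, mI (r x a) y = mI x (l a y)) ∧
  (∀ x y a, r (mI x y) a = mI x (r y a))

/-- The multiplication of the Dorroh extension `A ⋉_d I`. -/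
def dorrohMul {A I : Type} [AddCommGroup A] [AddCommGroup I]
    (mA : A → A → A) (mI : I → I → I) (l : A → I → I) (r : I → A → I)
    (p q : A × I) : A × I :=
  (mA p.1 q.1, l p.1 q.2 + r p.2 q.1 + mI p.2 q.2)

section Bilin2

variable {M N P Q : Type} [AddCommGroup M] [Module k M] [AddCommGroup N] [Module k N]
  [AddCommGroup P] [Module k P] [AddCommGroup Q] [Module k Q]

theorem Bilin2.map_add_left {f : M → N → P} (hf : Bilin2 (k := k) f) (x x' : M) (y : N) :
    f (x + x') y = f x y + f x' y :=
  hf.1 x x' y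

theorem Bilin2.map_add_right {f : M → N → P} (hf : Bilin2 (k := k) f) (x : M) (y y' : N) :
    f x (y + y') = f x y + f x y' :=
  hf.2.2.1 x y y'

theorem Bilin2.coprod_left {f : M → P → Q} {g : N → P → Q}
    (hf : Bilin2 (k := k) f) (hg : Bilin2 (k := k) g) :
    Bilin2 (k := k) (fun (p : M × N) c => f p.1 c + g p.2 c) := by
  obtain ⟨hf₁, hf₂, hf₃, hf₄⟩ := hf
  obtain ⟨hg₁, hg₂, hg₃, hg₄⟩ := hg
  refine ⟨fun x x' y => ?_, fun c x y => ?_, fun x y y' => ?_, fun c x y => ?_⟩ <;>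
    simp only [Prod.fst_add, Prod.snd_add, Prod.smul_fst, Prod.smul_snd, smul_add,
      hf₁, hf₂, hf₃, hf₄, hg₁, hg₂, hg₃, hg₄] <;> abel

theorem Bilin2.coprod_right {f : P → M → Q} {g : P → N → Q}
    (hf : Bilin2 (k := k) f) (hg : Bilin2 (k := k) g) :
    Bilin2 (k := k) (fun c (p : M × N) => f c p.1 + g c p.2) := by
  obtain ⟨hf₁, hf₂, hf₃, hf₄⟩ := hf
  obtain ⟨hg₁, hg₂, hg₃, hg₄⟩ := hg
  refine ⟨fun x x' y => ?_, fun c x y => ?_, fun x y y' => ?_, fun c x y => ?_⟩ <;>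
    simp only [Prod.fst_add, Prod.snd_add, Prod.smul_fst, Prod.smul_snd, smul_add,
      hf₁, hf₂, hf₃, hf₄, hg₁, hg₂, hg₃, hg₄] <;> abel

theorem Bilin2.prodMap_right {f : M → N → N} {g : M → P → P}
    (hf : Bilin2 (k := k) f) (hg : Bilin2 (k := k) g) :
    Bilin2 (k := k) (fun a (q : N × P) => (f a q.1, g a q.2)) := by
  obtain ⟨hf₁, hf₂, hf₃, hf₄⟩ := hf
  obtain ⟨hg₁, hg₂, hg₃, hg₄⟩ := hg
  exact ⟨fun x x' y => by simp only [hf₁, hg₁, Prod.mk_add_mk],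
    fun c x y => by simp only [hf₂, hg₂, Prod.smul_mk],
    fun x y y' => by simp only [Prod.fst_add, Prod.snd_add, hf₃, hg₃, Prod.mk_add_mk],
    fun c x y => by simp only [Prod.smul_fst, Prod.smul_snd, hf₄, hg₄, Prod.smul_mk]⟩

theorem Bilin2.prodMap_left {f : N → M → N} {g : P → M → P}
    (hf : Bilin2 (k := k) f) (hg : Bilin2 (k := k) g) :
    Bilin2 (k := k) (fun (q : N × P) a => (f q.1 a, g q.2 a)) := by
  obtain ⟨hf₁, hf₂, hf₃, hf₄⟩ := hf
  obtain ⟨hg₁, hg₂, hg₃, hg₄⟩ := hg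
  exact ⟨fun x x' y => by simp only [Prod.fst_add, Prod.snd_add, hf₁, hg₁, Prod.mk_add_mk],
    fun c x y => by simp only [Prod.smul_fst, Prod.smul_snd, hf₂, hg₂, Prod.smul_mk],
    fun x y y' => by simp only [hf₃, hg₃, Prod.mk_add_mk],
    fun c x y => by simp only [hf₄, hg₄, Prod.smul_mk]⟩

end Bilin2

section DorrohExtension

variable {A I : Type} [AddCommGroup A] [Module k A] [AddCommGroup I] [Module k I]
  {mA : A → A → A} {mI : I → I → I} {l : A → I → I} {r : I → A → I}

theorem Bilin2.dorrohMul (hmA : Bilin2 (k := k) mA) (hmI : Bilin2 (k := k) mI)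
    (hl : Bilin2 (k := k) l) (hr : Bilin2 (k := k) r) :
    Bilin2 (k := k) (dorrohMul mA mI l r) := by
  obtain ⟨hmA₁, hmA₂, hmA₃, hmA₄⟩ := hmA
  obtain ⟨hmI₁, hmI₂, hmI₃, hmI₄⟩ := hmI
  obtain ⟨hl₁, hl₂, hl₃, hl₄⟩ := hl
  obtain ⟨hr₁, hr₂, hr₃, hr₄⟩ := hr
  refine ⟨fun x x' y => ?_, fun c x y => ?_, fun x y y' => ?_, fun c x y => ?_⟩ <;>
    simp only [_root_.dorrohMul, Prod.ext_iff, Prod.fst_add, Prod.snd_add, Prod.smul_fst,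
      Prod.smul_snd, smul_add, hmA₁, hmA₂, hmA₃, hmA₄, hmI₁, hmI₂, hmI₃, hmI₄,
      hl₁, hl₂, hl₃, hl₄, hr₁, hr₂, hr₃, hr₄, true_and, and_self] <;> abel

theorem IsDorrohPairA.dorrohMul_assoc (h : IsDorrohPairA (k := k) mA mI l r) (p q s : A × I) :
    dorrohMul mA mI l r (dorrohMul mA mI l r p q) s =
      dorrohMul mA mI l r p (dorrohMul mA mI l r q s) := by
  obtain ⟨⟨-, hmA⟩, ⟨⟨hmI₁, -, hmI₃, -⟩, hmI⟩, ⟨-, -, hl₃, -⟩, ⟨hr₁, -, -, -⟩,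
    hll, hrr, hlr, hlm, hrm, hmr⟩ := h
  simp only [dorrohMul, Prod.ext_iff, hmA, hmI, hmI₁, hmI₃, hl₃, hr₁,
    hll, hrr, hlr, hlm, hrm, hmr]
  exact ⟨trivial, by abel⟩

theorem IsDorrohPairA.isAlgMul_dorrohMul (h : IsDorrohPairA (k := k) mA mI l r) :
    IsAlgMul (k := k) (dorrohMul mA mI l r) := by
  refine ⟨?_, h.dorrohMul_assoc⟩
  obtain ⟨⟨hmA, -⟩, ⟨hmI, -⟩, hl, hr, -⟩ := h
  exact hmA.dorrohMul hmI hl hr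

end DorrohExtension

section Iterated

variable {A₁ A₂ A₃ : Type} [AddCommGroup A₁] [Module k A₁] [AddCommGroup A₂] [Module k A₂]
  [AddCommGroup A₃] [Module k A₃]
  {m₁ : A₁ → A₁ → A₁} {m₂ : A₂ → A₂ → A₂} {m₃ : A₃ → A₃ → A₃}
  {l12 : A₁ → A₂ → A₂} {r21 : A₂ → A₁ → A₂}
  {l13 : A₁ → A₃ → A₃} {r31 : A₃ → A₁ → A₃}
  {l23 : A₂ → A₃ → A₃} {r32 : A₃ → A₂ → A₃}

theorem isDorrohPairA_dorrohMul_left (h12 : IsDorrohPairA (k := k) m₁ m₂ l12 r21)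
    (h13 : IsDorrohPairA (k := k) m₁ m₃ l13 r31) (h23 : IsDorrohPairA (k := k) m₂ m₃ l23 r32)
    (hb1 : ∀ a₁ c a₂, l13 a₁ (r32 c a₂) = r32 (l13 a₁ c) a₂)
    (hb2 : ∀ a₂ c a₁, l23 a₂ (r31 c a₁) = r31 (l23 a₂ c) a₁)
    (hc1 : ∀ a₁ a₂ a₃, l13 a₁ (l23 a₂ a₃) = l23 (l12 a₁ a₂) a₃)
    (hc2 : ∀ a₂ a₁ a₃, l23 a₂ (l13 a₁ a₃) = l23 (r21 a₂ a₁) a₃)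
    (hc3 : ∀ a₃ a₂ a₁, r31 (r32 a₃ a₂) a₁ = r32 a₃ (r21 a₂ a₁))
    (hc4 : ∀ a₃ a₁ a₂, r32 (r31 a₃ a₁) a₂ = r32 a₃ (l12 a₁ a₂)) :
    IsDorrohPairA (k := k) (dorrohMul m₁ m₂ l12 r21) m₃
      (fun p c => l13 p.1 c + l23 p.2 c) (fun c p => r31 c p.1 + r32 c p.2) := by
  obtain ⟨-, hm₃, hl13, hr31, hL13, hR13, hC13, hp13a, hp13b, hp13c⟩ := h13
  obtain ⟨-, -, hl23, hr32, hL23, hR23, hC23, hp23a, hp23b, hp23c⟩ := h23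
  refine ⟨h12.isAlgMul_dorrohMul, hm₃, hl13.coprod_left hl23, hr31.coprod_right hr32,
    fun a b x => ?_, fun x a b => ?_, fun a x b => ?_, fun a x y => ?_, fun x a y => ?_,
    fun x y a => ?_⟩
  · simp only [dorrohMul, hl23.map_add_left, hl13.map_add_right, hl23.map_add_right,
      hL13, hL23, hc1, hc2]
    abel
  · simp only [dorrohMul, hr31.map_add_left, hr32.map_add_left, hr32.map_add_right,
      hR13, hR23, hc3, hc4]
    abel
  · simp only [hr31.map_add_left, hr32.map_add_left, hl13.map_add_right, hl23.map_add_right,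
      hC13, hC23, hb1, hb2]
    abel
  · simp only [hp13a, hp23a, hm₃.1.map_add_left]
  · simp only [hm₃.1.map_add_left, hm₃.1.map_add_right, hp13b, hp23b]
  · simp only [hp13c, hp23c, hm₃.1.map_add_right]

theorem isDorrohPairA_dorrohMul_right (h12 : IsDorrohPairA (k := k) m₁ m₂ l12 r21)
    (h13 : IsDorrohPairA (k := k) m₁ m₃ l13 r31) (h23 : IsDorrohPairA (k := k) m₂ m₃ l23 r32)
    (hb1 : ∀ a₁ c a₂, l13 a₁ (r32 c a₂) = r32 (l13 a₁ c) a₂)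
    (hb2 : ∀ a₂ c a₁, l23 a₂ (r31 c a₁) = r31 (l23 a₂ c) a₁)
    (hc1 : ∀ a₁ a₂ a₃, l13 a₁ (l23 a₂ a₃) = l23 (l12 a₁ a₂) a₃)
    (hc2 : ∀ a₂ a₁ a₃, l23 a₂ (l13 a₁ a₃) = l23 (r21 a₂ a₁) a₃)
    (hc3 : ∀ a₃ a₂ a₁, r31 (r32 a₃ a₂) a₁ = r32 a₃ (r21 a₂ a₁))
    (hc4 : ∀ a₃ a₁ a₂, r32 (r31 a₃ a₁) a₂ = r32 a₃ (l12 a₁ a₂)) :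
    IsDorrohPairA (k := k) m₁ (dorrohMul m₂ m₃ l23 r32)
      (fun a q => (l12 a q.1, l13 a q.2)) (fun q a => (r21 q.1 a, r31 q.2 a)) := by
  obtain ⟨hm₁, -, hl12, hr21, hL12, hR12, hC12, hp12a, hp12b, hp12c⟩ := h12
  obtain ⟨-, -, hl13, hr31, hL13, hR13, hC13, hp13a, hp13b, hp13c⟩ := h13
  refine ⟨hm₁, h23.isAlgMul_dorrohMul, hl12.prodMap_right hl13, hr21.prodMap_left hr31,
    fun a b x => ?_, fun x a b => ?_, fun a x b => ?_, fun a x y => ?_, fun x a y => ?_,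
    fun x y a => ?_⟩
  · simp only [hL12, hL13]
  · simp only [hR12, hR13]
  · simp only [hC12, hC13]
  · simp only [dorrohMul, hl13.map_add_right, hp12a, hp13a, hc1, hb1]
  · simp only [dorrohMul, hp12b, hp13b, hc2, hc4]
  · simp only [dorrohMul, hr31.map_add_left, hp12c, hp13c, hb2, hc3]

omit [Module k A₁] [Module k A₂] [Module k A₃] in
theorem prodAssoc_dorrohMul (p q : (A₁ × A₂) × A₃) :
    Equiv.prodAssoc A₁ A₂ A₃
        (dorrohMul (dorrohMul m₁ m₂ l12 r21) m₃ (fun p c => l13 p.1 c + l23 p.2 c)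
          (fun c p => r31 c p.1 + r32 c p.2) p q) =
      dorrohMul m₁ (dorrohMul m₂ m₃ l23 r32) (fun a q => (l12 a q.1, l13 a q.2))
        (fun q a => (r21 q.1 a, r31 q.2 a)) (Equiv.prodAssoc A₁ A₂ A₃ p)
        (Equiv.prodAssoc A₁ A₂ A₃ q) := by
  simp only [dorrohMul, Equiv.prodAssoc_apply, Prod.mk_add_mk]
  congr 2
  abel

end Iterated

/-- **Proposition 1.8.** If `(A₁,A₂)`, `(A₁,A₃)`, `(A₂,A₃)` are Dorroh pairs of algebras,
`A₃` is both an `A₁`-`A₂`-bimodule and an `A₂`-`A₁`-bimodule, and the four mixed associativity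
conditions hold, then `(A₁⋉_d A₂, A₃)` and `(A₁, A₂⋉_d A₃)` are Dorroh pairs of algebras and
`((a₁,a₂),a₃) ↦ (a₁,(a₂,a₃))` is an algebra isomorphism
`(A₁⋉_d A₂)⋉_d A₃ ≅ A₁⋉_d (A₂⋉_d A₃)`. -/
theorem dorroh_algebra_iterated {A₁ A₂ A₃ : Type}
    [AddCommGroup A₁] [Module k A₁] [AddCommGroup A₂] [Module k A₂]
    [AddCommGroup A₃] [Module k A₃]
    (m₁ : A₁ → A₁ → A₁) (m₂ : A₂ → A₂ → A₂) (m₃ : A₃ → A₃ → A₃)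
    (l12 : A₁ → A₂ → A₂) (r21 : A₂ → A₁ → A₂)
    (l13 : A₁ → A₃ → A₃) (r31 : A₃ → A₁ → A₃)
    (l23 : A₂ → A₃ → A₃) (r32 : A₃ → A₂ → A₃)
    (h12 : IsDorrohPairA (k := k) m₁ m₂ l12 r21)
    (h13 : IsDorrohPairA (k := k) m₁ m₃ l13 r31)
    (h23 : IsDorrohPairA (k := k) m₂ m₃ l23 r32)
    -- `A₃` is an `A₁`-`A₂`-bimodule
    (hb1 : ∀ a₁ c a₂, l13 a₁ (r32 c a₂) = r32 (l13 a₁ c) a₂)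
    -- `A₃` is an `A₂`-`A₁`-bimodule
    (hb2 : ∀ a₂ c a₁, l23 a₂ (r31 c a₁) = r31 (l23 a₂ c) a₁)
    -- a₁(a₂a₃) = (a₁a₂)a₃
    (hc1 : ∀ a₁ a₂ a₃, l13 a₁ (l23 a₂ a₃) = l23 (l12 a₁ a₂) a₃)
    -- a₂(a₁a₃) = (a₂a₁)a₃
    (hc2 : ∀ a₂ a₁ a₃, l23 a₂ (l13 a₁ a₃) = l23 (r21 a₂ a₁) a₃)
    -- (a₃a₂)a₁ = a₃(a₂a₁)
    (hc3 : ∀ a₃ a₂ a₁, r31 (r32 a₃ a₂) a₁ = r32 a₃ (r21 a₂ a₁))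
    -- (a₃a₁)a₂ = a₃(a₁a₂)
    (hc4 : ∀ a₃ a₁ a₂, r32 (r31 a₃ a₁) a₂ = r32 a₃ (l12 a₁ a₂)) :
    IsDorrohPairA (k := k) (dorrohMul m₁ m₂ l12 r21) m₃
      (fun p c => l13 p.1 c + l23 p.2 c)
      (fun c p => r31 c p.1 + r32 c p.2) ∧
    IsDorrohPairA (k := k) m₁ (dorrohMul m₂ m₃ l23 r32)
      (fun a q => (l12 a q.1, l13 a q.2))
      (fun q a => (r21 q.1 a, r31 q.2 a)) ∧
    Function.Bijective (fun p : (A₁ × A₂) × A₃ => (p.1.1, (p.1.2, p.2))) ∧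
    ∀ p q : (A₁ × A₂) × A₃,
      (fun p : (A₁ × A₂) × A₃ => (p.1.1, (p.1.2, p.2)))
        (dorrohMul (dorrohMul m₁ m₂ l12 r21) m₃
          (fun p c => l13 p.1 c + l23 p.2 c)
          (fun c p => r31 c p.1 + r32 c p.2) p q) =
      dorrohMul m₁ (dorrohMul m₂ m₃ l23 r32)
        (fun a q => (l12 a q.1, l13 a q.2))
        (fun q a => (r21 q.1 a, r31 q.2 a))
        ((fun p : (A₁ × A₂) × A₃ => (p.1.1, (p.1.2, p.2))) p)
        ((fun p : (A₁ × A₂) × A₃ => (p.1.1, (p.1.2, p.2))) q) := by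
  exact ⟨isDorrohPairA_dorrohMul_left h12 h13 h23 hb1 hb2 hc1 hc2 hc3 hc4,
    isDorrohPairA_dorrohMul_right h12 h13 h23 hb1 hb2 hc1 hc2 hc3 hc4,
    (Equiv.prodAssoc A₁ A₂ A₃).bijective, prodAssoc_dorrohMul⟩

end
end

section
/- Let (C, P) be a Dorroh pair of coalgebras over a field k. Then the comultiplication Δ on C⋉_d P defined by Δ(c,p) = Σ (c₁,0)⊗(c₂,0) + Σ (p₍₋₁₎,0)⊗(0,p₍₀₎) + Σ (0,p₍₀₎)⊗(p₍₁₎,0) + Σ (0,p₁)⊗(0,p₂) is coassociative: (Δ⊗id)Δ = (id⊗Δ)Δ. -/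
open TensorProduct

section

variable {k : Type} [Field k] {C P : Type}
  [AddCommGroup C] [Module k C] [AddCommGroup P] [Module k P]

/-- Coassociativity of a (not necessarily counital) comultiplication. -/
def Coassoc (Δ : C →ₗ[k] C ⊗[k] C) : Prop :=
  (TensorProduct.assoc k C C C).toLinearMap ∘ₗ Δ.rTensor C ∘ₗ Δ = Δ.lTensor C ∘ₗ Δ

/-- `(C, P)` together with the comultiplications `ΔC`, `ΔP` and the coactions
`ρl : P → C ⊗ P`, `ρr : P → P ⊗ C` is a Dorroh pair of coalgebras. -/
def IsDorrohPairC (ΔC : C →ₗ[k] C ⊗[k] C) (ΔP : P →ₗ[k] P ⊗[k] P)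
    (ρl : P →ₗ[k] C ⊗[k] P) (ρr : P →ₗ[k] P ⊗[k] C) : Prop :=
  Coassoc ΔC ∧ Coassoc ΔP ∧
  ((TensorProduct.assoc k C C P).toLinearMap ∘ₗ ΔC.rTensor P ∘ₗ ρl = ρl.lTensor C ∘ₗ ρl) ∧
  (ΔC.lTensor P ∘ₗ ρr = (TensorProduct.assoc k P C C).toLinearMap ∘ₗ ρr.rTensor C ∘ₗ ρr) ∧
  (ρr.lTensor C ∘ₗ ρl = (TensorProduct.assoc k C P C).toLinearMap ∘ₗ ρl.rTensor C ∘ₗ ρr) ∧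
  (ρr.lTensor P ∘ₗ ΔP = (TensorProduct.assoc k P P C).toLinearMap ∘ₗ ΔP.rTensor C ∘ₗ ρr) ∧
  ((TensorProduct.assoc k C P P).toLinearMap ∘ₗ ρl.rTensor P ∘ₗ ΔP = ΔP.lTensor C ∘ₗ ρl) ∧
  ((TensorProduct.assoc k P C P).toLinearMap ∘ₗ ρr.rTensor P ∘ₗ ΔP = ρl.lTensor P ∘ₗ ΔP)

/-- The comultiplication of the Dorroh extension `C ⋉_d P`,
`Δ(c,p) = Σ (c₁,0)⊗(c₂,0) + Σ (p₍₋₁₎,0)⊗(0,p₍₀₎) + Σ (0,p₍₀₎)⊗(p₍₁₎,0) + Σ (0,p₁)⊗(0,p₂)`. -/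
noncomputable def dorrohComul (ΔC : C →ₗ[k] C ⊗[k] C) (ΔP : P →ₗ[k] P ⊗[k] P)
    (ρl : P →ₗ[k] C ⊗[k] P) (ρr : P →ₗ[k] P ⊗[k] C) :
    (C × P) →ₗ[k] (C × P) ⊗[k] (C × P) :=
  TensorProduct.map (LinearMap.inl k C P) (LinearMap.inl k C P) ∘ₗ ΔC ∘ₗ LinearMap.fst k C P
  + TensorProduct.map (LinearMap.inl k C P) (LinearMap.inr k C P) ∘ₗ ρl ∘ₗ LinearMap.snd k C P
  + TensorProduct.map (LinearMap.inr k C P) (LinearMap.inl k C P) ∘ₗ ρr ∘ₗ LinearMap.snd k C P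
  + TensorProduct.map (LinearMap.inr k C P) (LinearMap.inr k C P) ∘ₗ ΔP ∘ₗ LinearMap.snd k C P

/-! Restricted to `C`, the comultiplication `Δ` is `ΔC` transported along `ι₁ : C → C × P`, so
coassociativity there is that of `ΔC`. Restricted to `P`, both `(Δ ⊗ id)Δ` and `(id ⊗ Δ)Δ`
split into seven terms, indexed by which of `C`, `P` each of the three tensor factors lies in
(`CCP, CPC, PCC, CPP, PCP, PPC, PPP`), and the two terms with the same index agree by the
corresponding axiom of a Dorroh pair. -/

variable {R M N M' N' S S' X : Type*} [CommSemiring R]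
  [AddCommMonoid M] [Module R M] [AddCommMonoid N] [Module R N]
  [AddCommMonoid M'] [Module R M'] [AddCommMonoid N'] [Module R N']
  [AddCommMonoid S] [Module R S] [AddCommMonoid S'] [Module R S'] [AddCommMonoid X] [Module R X]

theorem LinearMap.rTensor_comp_map_comp (f' : M' →ₗ[R] S) (f : M →ₗ[R] M') (g : N →ₗ[R] N')
    (e : X →ₗ[R] M ⊗[R] N) :
    f'.rTensor N' ∘ₗ (map f g ∘ₗ e) = map (f' ∘ₗ f) g ∘ₗ e := by
  rw [← LinearMap.comp_assoc, LinearMap.rTensor_comp_map]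

theorem LinearMap.lTensor_comp_map_comp (g' : N' →ₗ[R] S) (f : M →ₗ[R] M') (g : N →ₗ[R] N')
    (e : X →ₗ[R] M ⊗[R] N) :
    g'.lTensor M' ∘ₗ (map f g ∘ₗ e) = map f (g' ∘ₗ g) ∘ₗ e := by
  rw [← LinearMap.comp_assoc, LinearMap.lTensor_comp_map]

theorem LinearMap.map_comp_rTensor_comp (f : M →ₗ[R] M') (g : N →ₗ[R] N') (f' : S →ₗ[R] M)
    (e : X →ₗ[R] S ⊗[R] N) :
    map f g ∘ₗ (f'.rTensor N ∘ₗ e) = map (f ∘ₗ f') g ∘ₗ e := by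
  rw [← LinearMap.comp_assoc, LinearMap.map_comp_rTensor]

theorem LinearMap.map_comp_lTensor_comp (f : M →ₗ[R] M') (g : N →ₗ[R] N') (g' : S →ₗ[R] N)
    (e : X →ₗ[R] M ⊗[R] S) :
    map f g ∘ₗ (g'.lTensor M ∘ₗ e) = map f (g ∘ₗ g') ∘ₗ e := by
  rw [← LinearMap.comp_assoc, LinearMap.map_comp_lTensor]

theorem TensorProduct.map_map_comp_assoc_comp (f : M →ₗ[R] M') (g : N →ₗ[R] N') (h : S →ₗ[R] S')
    (e : X →ₗ[R] M ⊗[R] N ⊗[R] S) :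
    map f (map g h) ∘ₗ ((TensorProduct.assoc R M N S).toLinearMap ∘ₗ e) =
      (TensorProduct.assoc R M' N' S').toLinearMap ∘ₗ (map (map f g) h ∘ₗ e) := by
  rw [← LinearMap.comp_assoc, map_map_comp_assoc_eq, LinearMap.comp_assoc]

section Dorroh

variable (ΔC : C →ₗ[k] C ⊗[k] C) (ΔP : P →ₗ[k] P ⊗[k] P)
  (ρl : P →ₗ[k] C ⊗[k] P) (ρr : P →ₗ[k] P ⊗[k] C)

local notation "ι₁" => LinearMap.inl k C P
local notation "ι₂" => LinearMap.inr k C P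

theorem dorrohComul_comp_inl :
    dorrohComul ΔC ΔP ρl ρr ∘ₗ ι₁ = map ι₁ ι₁ ∘ₗ ΔC := by
  simp [dorrohComul, LinearMap.add_comp, LinearMap.comp_assoc]

theorem dorrohComul_comp_inr :
    dorrohComul ΔC ΔP ρl ρr ∘ₗ ι₂ =
      map ι₁ ι₂ ∘ₗ ρl + map ι₂ ι₁ ∘ₗ ρr + map ι₂ ι₂ ∘ₗ ΔP := by
  simp [dorrohComul, LinearMap.add_comp, LinearMap.comp_assoc]

theorem dorrohComul_coassoc_comp_inl (hC : Coassoc ΔC) :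
    (TensorProduct.assoc k (C × P) (C × P) (C × P)).toLinearMap ∘ₗ
        (dorrohComul ΔC ΔP ρl ρr).rTensor (C × P) ∘ₗ dorrohComul ΔC ΔP ρl ρr ∘ₗ ι₁ =
      (dorrohComul ΔC ΔP ρl ρr).lTensor (C × P) ∘ₗ dorrohComul ΔC ΔP ρl ρr ∘ₗ ι₁ := by
  simp only [dorrohComul_comp_inl, LinearMap.rTensor_comp_map_comp,
    LinearMap.lTensor_comp_map_comp, ← LinearMap.map_comp_rTensor_comp,
    ← LinearMap.map_comp_lTensor_comp, ← TensorProduct.map_map_comp_assoc_comp]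
  rw [← hC]

theorem dorrohComul_coassoc_comp_inr (h : IsDorrohPairC ΔC ΔP ρl ρr) :
    (TensorProduct.assoc k (C × P) (C × P) (C × P)).toLinearMap ∘ₗ
        (dorrohComul ΔC ΔP ρl ρr).rTensor (C × P) ∘ₗ dorrohComul ΔC ΔP ρl ρr ∘ₗ ι₂ =
      (dorrohComul ΔC ΔP ρl ρr).lTensor (C × P) ∘ₗ dorrohComul ΔC ΔP ρl ρr ∘ₗ ι₂ := by
  obtain ⟨-, hP, hCCP, hPCC, hCPC, hPPC, hCPP, hPCP⟩ := h
  unfold Coassoc at hP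
  -- normal form: `map (map a b) c ∘ₗ φ` or `map a (map b c) ∘ₗ φ` with `a, b, c ∈ {ι₁, ι₂}`
  simp only [dorrohComul_comp_inl, dorrohComul_comp_inr, LinearMap.comp_add, LinearMap.add_comp,
    map_add_left, map_add_right, LinearMap.rTensor_comp_map_comp,
    LinearMap.lTensor_comp_map_comp, ← LinearMap.map_comp_rTensor_comp,
    ← LinearMap.map_comp_lTensor_comp, ← TensorProduct.map_map_comp_assoc_comp,
    hP, hCCP, ← hPCC, ← hCPC, ← hPPC, hCPP, hPCP]
  abel

end Dorroh

/-- **Lemma 2.3.** The comultiplication of the Dorroh extension `C ⋉_d P` of a Dorroh pair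
of coalgebras `(C, P)` is coassociative. -/
theorem dorrohComul_coassoc (ΔC : C →ₗ[k] C ⊗[k] C) (ΔP : P →ₗ[k] P ⊗[k] P)
    (ρl : P →ₗ[k] C ⊗[k] P) (ρr : P →ₗ[k] P ⊗[k] C)
    (h : IsDorrohPairC ΔC ΔP ρl ρr) :
    Coassoc (dorrohComul ΔC ΔP ρl ρr) := by
  unfold Coassoc
  apply LinearMap.prod_ext <;> simp only [LinearMap.comp_assoc]
  · exact dorrohComul_coassoc_comp_inl ΔC ΔP ρl ρr h.1
  · exact dorrohComul_coassoc_comp_inr ΔC ΔP ρl ρr h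

end
end

section
/- Let (D, Δ) be a coalgebra over a field k, C ⊆ D a subcoalgebra (Δ(C) ⊆ C⊗C), and P ⊆ D a coideal (Δ(P) ⊆ D⊗P + P⊗D) such that D = C ⊕ P as vector spaces, with projections π_C : D → C and π_P : D → P. Define Δ_P = (π_P⊗π_P)∘Δ restricted to P, ρ_l = (π_C⊗π_P)∘Δ restricted to P, and ρ_r = (π_P⊗π_C)∘Δ restricted to P. Then (C, P) with these maps is a Dorroh pair of coalgebras (Δ_P is coassociative, ρ_l and ρ_r make P a C-bicomodule, and all three compatibility equations with Δ_P hold), and the map φ : C⋉_d P → D, φ(c,p) = c + p, is a coalgebra isomorphism. -/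
open TensorProduct

section

variable {k : Type} [Field k] {C P : Type}
  [AddCommGroup C] [Module k C] [AddCommGroup P] [Module k P]

section Helpers
variable {X Y Z W E D X' Y' : Type}
  [AddCommGroup X] [Module k X] [AddCommGroup Y] [Module k Y]
  [AddCommGroup Z] [Module k Z] [AddCommGroup W] [Module k W]
  [AddCommGroup E] [Module k E] [AddCommGroup D] [Module k D]
  [AddCommGroup X'] [Module k X'] [AddCommGroup Y'] [Module k Y']

lemma rT_eq (f : X →ₗ[k] Y) : f.rTensor Z = TensorProduct.map f LinearMap.id := rfl
lemma lT_eq (f : X →ₗ[k] Y) : f.lTensor Z = TensorProduct.map LinearMap.id f := rfl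

theorem coassoc_conj (Δ : D →ₗ[k] D ⊗[k] D) (hΔ : Coassoc Δ)
    (φ : E →ₗ[k] D) (ψ : D →ₗ[k] E) (h : φ ∘ₗ ψ = LinearMap.id) :
    Coassoc (TensorProduct.map ψ ψ ∘ₗ Δ ∘ₗ φ) := by
  unfold Coassoc at hΔ ⊢
  have hψ : (TensorProduct.map ψ ψ ∘ₗ Δ ∘ₗ φ) ∘ₗ ψ = TensorProduct.map ψ ψ ∘ₗ Δ := by
    rw [LinearMap.comp_assoc, LinearMap.comp_assoc, h, LinearMap.comp_id]
  calc (TensorProduct.assoc k E E E).toLinearMap ∘ₗ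
        (TensorProduct.map ψ ψ ∘ₗ Δ ∘ₗ φ).rTensor E ∘ₗ (TensorProduct.map ψ ψ ∘ₗ Δ ∘ₗ φ)
      = (TensorProduct.assoc k E E E).toLinearMap ∘ₗ
        ((TensorProduct.map ψ ψ ∘ₗ Δ ∘ₗ φ).rTensor E ∘ₗ TensorProduct.map ψ ψ) ∘ₗ (Δ ∘ₗ φ) := by
        simp only [LinearMap.comp_assoc]
    _ = (TensorProduct.assoc k E E E).toLinearMap ∘ₗ
        (TensorProduct.map (TensorProduct.map ψ ψ ∘ₗ Δ) ψ) ∘ₗ (Δ ∘ₗ φ) := by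
        rw [LinearMap.rTensor_comp_map, hψ]
    _ = ((TensorProduct.assoc k E E E).toLinearMap ∘ₗ
        TensorProduct.map (TensorProduct.map ψ ψ) ψ) ∘ₗ (Δ.rTensor D ∘ₗ Δ) ∘ₗ φ := by
        rw [← LinearMap.map_comp_rTensor]
        simp only [LinearMap.comp_assoc]
    _ = (TensorProduct.map ψ (TensorProduct.map ψ ψ) ∘ₗ
        (TensorProduct.assoc k D D D).toLinearMap) ∘ₗ (Δ.rTensor D ∘ₗ Δ) ∘ₗ φ := by
        rw [TensorProduct.map_map_comp_assoc_eq]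
    _ = TensorProduct.map ψ (TensorProduct.map ψ ψ) ∘ₗ
        ((TensorProduct.assoc k D D D).toLinearMap ∘ₗ Δ.rTensor D ∘ₗ Δ) ∘ₗ φ := by
        simp only [LinearMap.comp_assoc]
    _ = TensorProduct.map ψ (TensorProduct.map ψ ψ) ∘ₗ (Δ.lTensor D ∘ₗ Δ) ∘ₗ φ := by rw [hΔ]
    _ = (TensorProduct.map ψ (TensorProduct.map ψ ψ) ∘ₗ Δ.lTensor D) ∘ₗ (Δ ∘ₗ φ) := by
        simp only [LinearMap.comp_assoc]
    _ = TensorProduct.map ψ (TensorProduct.map ψ ψ ∘ₗ Δ) ∘ₗ (Δ ∘ₗ φ) := by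
        rw [LinearMap.map_comp_lTensor]
    _ = ((TensorProduct.map ψ ψ ∘ₗ Δ ∘ₗ φ).lTensor E ∘ₗ TensorProduct.map ψ ψ) ∘ₗ (Δ ∘ₗ φ) := by
        rw [LinearMap.lTensor_comp_map, hψ]
    _ = (TensorProduct.map ψ ψ ∘ₗ Δ ∘ₗ φ).lTensor E ∘ₗ (TensorProduct.map ψ ψ ∘ₗ Δ ∘ₗ φ) := by
        simp only [LinearMap.comp_assoc]

lemma map_comp_reassoc (f₂ : X →ₗ[k] X') (f₁ : Y →ₗ[k] X) (g₂ : Z →ₗ[k] Y') (g₁ : W →ₗ[k] Z)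
    (h : E →ₗ[k] Y ⊗[k] W) :
    TensorProduct.map f₂ g₂ ∘ₗ TensorProduct.map f₁ g₁ ∘ₗ h
      = TensorProduct.map (f₂ ∘ₗ f₁) (g₂ ∘ₗ g₁) ∘ₗ h := by
  rw [← LinearMap.comp_assoc, ← TensorProduct.map_comp]

theorem coassoc_extract (Δ' : E →ₗ[k] E ⊗[k] E) (h : Coassoc Δ')
    (a : E →ₗ[k] X) (b : E →ₗ[k] Y) (c : E →ₗ[k] Z) (i : W →ₗ[k] E) :
    (TensorProduct.assoc k X Y Z).toLinearMap ∘ₗ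
        TensorProduct.map (TensorProduct.map a b ∘ₗ Δ') c ∘ₗ (Δ' ∘ₗ i)
      = TensorProduct.map a (TensorProduct.map b c ∘ₗ Δ') ∘ₗ (Δ' ∘ₗ i) := by
  unfold Coassoc at h
  calc (TensorProduct.assoc k X Y Z).toLinearMap ∘ₗ
        TensorProduct.map (TensorProduct.map a b ∘ₗ Δ') c ∘ₗ (Δ' ∘ₗ i)
      = ((TensorProduct.assoc k X Y Z).toLinearMap ∘ₗ
          TensorProduct.map (TensorProduct.map a b) c) ∘ₗ (Δ'.rTensor E ∘ₗ Δ') ∘ₗ i := by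
        rw [← LinearMap.map_comp_rTensor]
        simp only [LinearMap.comp_assoc]
    _ = (TensorProduct.map a (TensorProduct.map b c) ∘ₗ
          (TensorProduct.assoc k E E E).toLinearMap) ∘ₗ (Δ'.rTensor E ∘ₗ Δ') ∘ₗ i := by
        rw [TensorProduct.map_map_comp_assoc_eq]
    _ = TensorProduct.map a (TensorProduct.map b c) ∘ₗ
          ((TensorProduct.assoc k E E E).toLinearMap ∘ₗ Δ'.rTensor E ∘ₗ Δ') ∘ₗ i := by
        simp only [LinearMap.comp_assoc]
    _ = (TensorProduct.map a (TensorProduct.map b c) ∘ₗ Δ'.lTensor E) ∘ₗ (Δ' ∘ₗ i) := by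
        rw [h]; simp only [LinearMap.comp_assoc]
    _ = TensorProduct.map a (TensorProduct.map b c ∘ₗ Δ') ∘ₗ (Δ' ∘ₗ i) := by
        rw [LinearMap.map_comp_lTensor]
end Helpers

section Master
variable (ΔC : C →ₗ[k] C ⊗[k] C) (ΔP : P →ₗ[k] P ⊗[k] P)
    (ρl : P →ₗ[k] C ⊗[k] P) (ρr : P →ₗ[k] P ⊗[k] C)

lemma dc_inl : dorrohComul ΔC ΔP ρl ρr ∘ₗ LinearMap.inl k C P
    = TensorProduct.map (LinearMap.inl k C P) (LinearMap.inl k C P) ∘ₗ ΔC := by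
  unfold dorrohComul
  simp only [LinearMap.add_comp, LinearMap.comp_assoc, LinearMap.fst_comp_inl,
    LinearMap.snd_comp_inl, LinearMap.comp_id, LinearMap.comp_zero, LinearMap.zero_comp,
    add_zero, zero_add]

lemma dc_inr : dorrohComul ΔC ΔP ρl ρr ∘ₗ LinearMap.inr k C P
    = TensorProduct.map (LinearMap.inl k C P) (LinearMap.inr k C P) ∘ₗ ρl
      + TensorProduct.map (LinearMap.inr k C P) (LinearMap.inl k C P) ∘ₗ ρr
      + TensorProduct.map (LinearMap.inr k C P) (LinearMap.inr k C P) ∘ₗ ΔP := by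
  unfold dorrohComul
  simp only [LinearMap.add_comp, LinearMap.comp_assoc, LinearMap.fst_comp_inr,
    LinearMap.snd_comp_inr, LinearMap.comp_id, LinearMap.comp_zero, LinearMap.zero_comp,
    add_zero, zero_add]

theorem isDorrohPair_of_coassoc (h : Coassoc (dorrohComul ΔC ΔP ρl ρr)) :
    IsDorrohPairC ΔC ΔP ρl ρr := by
  set Δ₂ := dorrohComul ΔC ΔP ρl ρr with hD2
  have c11l : TensorProduct.map (LinearMap.fst k C P) (LinearMap.fst k C P) ∘ₗ
      Δ₂ ∘ₗ LinearMap.inl k C P = ΔC := by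
    rw [dc_inl, map_comp_reassoc]
    simp only [LinearMap.fst_comp_inl, TensorProduct.map_id, LinearMap.id_comp]
  have c11r : TensorProduct.map (LinearMap.fst k C P) (LinearMap.fst k C P) ∘ₗ
      Δ₂ ∘ₗ LinearMap.inr k C P = 0 := by
    rw [dc_inr]
    simp only [LinearMap.comp_add, map_comp_reassoc, LinearMap.fst_comp_inl,
      LinearMap.fst_comp_inr, TensorProduct.map_zero_left, TensorProduct.map_zero_right,
      LinearMap.zero_comp, add_zero, zero_add]
  have c12l : TensorProduct.map (LinearMap.fst k C P) (LinearMap.snd k C P) ∘ₗ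
      Δ₂ ∘ₗ LinearMap.inl k C P = 0 := by
    rw [dc_inl, map_comp_reassoc]
    simp only [LinearMap.snd_comp_inl, TensorProduct.map_zero_right, LinearMap.zero_comp]
  have c12r : TensorProduct.map (LinearMap.fst k C P) (LinearMap.snd k C P) ∘ₗ
      Δ₂ ∘ₗ LinearMap.inr k C P = ρl := by
    rw [dc_inr]
    simp only [LinearMap.comp_add, map_comp_reassoc, LinearMap.fst_comp_inl,
      LinearMap.fst_comp_inr, LinearMap.snd_comp_inl, LinearMap.snd_comp_inr,
      TensorProduct.map_zero_left, TensorProduct.map_zero_right, TensorProduct.map_id,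
      LinearMap.zero_comp, LinearMap.id_comp, add_zero, zero_add]
  have c21l : TensorProduct.map (LinearMap.snd k C P) (LinearMap.fst k C P) ∘ₗ
      Δ₂ ∘ₗ LinearMap.inl k C P = 0 := by
    rw [dc_inl, map_comp_reassoc]
    simp only [LinearMap.snd_comp_inl, TensorProduct.map_zero_left, LinearMap.zero_comp]
  have c21r : TensorProduct.map (LinearMap.snd k C P) (LinearMap.fst k C P) ∘ₗ
      Δ₂ ∘ₗ LinearMap.inr k C P = ρr := by
    rw [dc_inr]
    simp only [LinearMap.comp_add, map_comp_reassoc, LinearMap.fst_comp_inl,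
      LinearMap.fst_comp_inr, LinearMap.snd_comp_inl, LinearMap.snd_comp_inr,
      TensorProduct.map_zero_left, TensorProduct.map_zero_right, TensorProduct.map_id,
      LinearMap.zero_comp, LinearMap.id_comp, add_zero, zero_add]
  have c22l : TensorProduct.map (LinearMap.snd k C P) (LinearMap.snd k C P) ∘ₗ
      Δ₂ ∘ₗ LinearMap.inl k C P = 0 := by
    rw [dc_inl, map_comp_reassoc]
    simp only [LinearMap.snd_comp_inl, TensorProduct.map_zero_left, LinearMap.zero_comp]
  have c22r : TensorProduct.map (LinearMap.snd k C P) (LinearMap.snd k C P) ∘ₗ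
      Δ₂ ∘ₗ LinearMap.inr k C P = ΔP := by
    rw [dc_inr]
    simp only [LinearMap.comp_add, map_comp_reassoc, LinearMap.fst_comp_inl,
      LinearMap.fst_comp_inr, LinearMap.snd_comp_inl, LinearMap.snd_comp_inr,
      TensorProduct.map_zero_left, TensorProduct.map_zero_right, TensorProduct.map_id,
      LinearMap.zero_comp, LinearMap.id_comp, add_zero, zero_add]
  refine ⟨?_, ?_, ?_, ?_, ?_, ?_, ?_, ?_⟩
  · -- Coassoc ΔC
    have h1 := coassoc_extract Δ₂ h (LinearMap.fst k C P) (LinearMap.fst k C P)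
      (LinearMap.fst k C P) (LinearMap.inl k C P)
    rw [dc_inl] at h1
    simp only [map_comp_reassoc, LinearMap.comp_assoc, c11l, c11r, c12l, c12r, c21l, c21r,
      c22l, c22r, LinearMap.fst_comp_inl, LinearMap.fst_comp_inr, LinearMap.snd_comp_inl,
      LinearMap.snd_comp_inr, TensorProduct.map_zero_left, TensorProduct.map_zero_right,
      LinearMap.zero_comp, LinearMap.comp_zero, add_zero, zero_add, LinearMap.comp_add] at h1
    unfold Coassoc
    rw [rT_eq, lT_eq]
    exact h1
  · -- Coassoc ΔP
    have h1 := coassoc_extract Δ₂ h (LinearMap.snd k C P) (LinearMap.snd k C P)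
      (LinearMap.snd k C P) (LinearMap.inr k C P)
    rw [dc_inr] at h1
    simp only [map_comp_reassoc, LinearMap.comp_assoc, c11l, c11r, c12l, c12r, c21l, c21r,
      c22l, c22r, LinearMap.fst_comp_inl, LinearMap.fst_comp_inr, LinearMap.snd_comp_inl,
      LinearMap.snd_comp_inr, TensorProduct.map_zero_left, TensorProduct.map_zero_right,
      LinearMap.zero_comp, LinearMap.comp_zero, add_zero, zero_add, LinearMap.comp_add] at h1
    unfold Coassoc
    rw [rT_eq, lT_eq]
    exact h1
  · have h1 := coassoc_extract Δ₂ h (LinearMap.fst k C P) (LinearMap.fst k C P)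
      (LinearMap.snd k C P) (LinearMap.inr k C P)
    rw [dc_inr] at h1
    simp only [map_comp_reassoc, LinearMap.comp_assoc, c11l, c11r, c12l, c12r, c21l, c21r,
      c22l, c22r, LinearMap.fst_comp_inl, LinearMap.fst_comp_inr, LinearMap.snd_comp_inl,
      LinearMap.snd_comp_inr, TensorProduct.map_zero_left, TensorProduct.map_zero_right,
      LinearMap.zero_comp, LinearMap.comp_zero, add_zero, zero_add, LinearMap.comp_add] at h1
    rw [rT_eq, lT_eq]
    exact h1
  · have h1 := coassoc_extract Δ₂ h (LinearMap.snd k C P) (LinearMap.fst k C P)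
      (LinearMap.fst k C P) (LinearMap.inr k C P)
    rw [dc_inr] at h1
    simp only [map_comp_reassoc, LinearMap.comp_assoc, c11l, c11r, c12l, c12r, c21l, c21r,
      c22l, c22r, LinearMap.fst_comp_inl, LinearMap.fst_comp_inr, LinearMap.snd_comp_inl,
      LinearMap.snd_comp_inr, TensorProduct.map_zero_left, TensorProduct.map_zero_right,
      LinearMap.zero_comp, LinearMap.comp_zero, add_zero, zero_add, LinearMap.comp_add] at h1
    rw [rT_eq, lT_eq]
    exact h1.symm
  · have h1 := coassoc_extract Δ₂ h (LinearMap.fst k C P) (LinearMap.snd k C P)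
      (LinearMap.fst k C P) (LinearMap.inr k C P)
    rw [dc_inr] at h1
    simp only [map_comp_reassoc, LinearMap.comp_assoc, c11l, c11r, c12l, c12r, c21l, c21r,
      c22l, c22r, LinearMap.fst_comp_inl, LinearMap.fst_comp_inr, LinearMap.snd_comp_inl,
      LinearMap.snd_comp_inr, TensorProduct.map_zero_left, TensorProduct.map_zero_right,
      LinearMap.zero_comp, LinearMap.comp_zero, add_zero, zero_add, LinearMap.comp_add] at h1
    rw [rT_eq, lT_eq]
    exact h1.symm
  · have h1 := coassoc_extract Δ₂ h (LinearMap.snd k C P) (LinearMap.snd k C P)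
      (LinearMap.fst k C P) (LinearMap.inr k C P)
    rw [dc_inr] at h1
    simp only [map_comp_reassoc, LinearMap.comp_assoc, c11l, c11r, c12l, c12r, c21l, c21r,
      c22l, c22r, LinearMap.fst_comp_inl, LinearMap.fst_comp_inr, LinearMap.snd_comp_inl,
      LinearMap.snd_comp_inr, TensorProduct.map_zero_left, TensorProduct.map_zero_right,
      LinearMap.zero_comp, LinearMap.comp_zero, add_zero, zero_add, LinearMap.comp_add] at h1
    rw [rT_eq, lT_eq]
    exact h1.symm
  · have h1 := coassoc_extract Δ₂ h (LinearMap.fst k C P) (LinearMap.snd k C P)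
      (LinearMap.snd k C P) (LinearMap.inr k C P)
    rw [dc_inr] at h1
    simp only [map_comp_reassoc, LinearMap.comp_assoc, c11l, c11r, c12l, c12r, c21l, c21r,
      c22l, c22r, LinearMap.fst_comp_inl, LinearMap.fst_comp_inr, LinearMap.snd_comp_inl,
      LinearMap.snd_comp_inr, TensorProduct.map_zero_left, TensorProduct.map_zero_right,
      LinearMap.zero_comp, LinearMap.comp_zero, add_zero, zero_add, LinearMap.comp_add] at h1
    rw [rT_eq, lT_eq]
    exact h1
  · have h1 := coassoc_extract Δ₂ h (LinearMap.snd k C P) (LinearMap.fst k C P)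
      (LinearMap.snd k C P) (LinearMap.inr k C P)
    rw [dc_inr] at h1
    simp only [map_comp_reassoc, LinearMap.comp_assoc, c11l, c11r, c12l, c12r, c21l, c21r,
      c22l, c22r, LinearMap.fst_comp_inl, LinearMap.fst_comp_inr, LinearMap.snd_comp_inl,
      LinearMap.snd_comp_inr, TensorProduct.map_zero_left, TensorProduct.map_zero_right,
      LinearMap.zero_comp, LinearMap.comp_zero, add_zero, zero_add, LinearMap.comp_add] at h1
    rw [rT_eq, lT_eq]
    exact h1
end Master



/-- **Proposition 2.5.** If `D` is a coalgebra Dorroh extension of a subcoalgebra `C` by a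
coideal `P` (so `D = C ⊕ P` with projections `π_C`, `π_P`), then `(C, P)` with the induced
maps `Δ_P = (π_P⊗π_P)Δ`, `ρ_l = (π_C⊗π_P)Δ`, `ρ_r = (π_P⊗π_C)Δ` (restricted to `P`) is a
Dorroh pair of coalgebras, and `φ(c,p) = c + p` is a coalgebra isomorphism
`C ⋉_d P ≅ D`. -/
theorem dorroh_extension_of_coalgebra_decomposition {D : Type} [AddCommGroup D] [Module k D]
    (Δ : D →ₗ[k] D ⊗[k] D) (hΔ : Coassoc Δ)
    (C P : Submodule k D)
    (hC : ∀ c ∈ C, Δ c ∈ LinearMap.range (TensorProduct.map C.subtype C.subtype))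
    (hP : ∀ p ∈ P, Δ p ∈
      LinearMap.range (LinearMap.lTensor D P.subtype) ⊔
      LinearMap.range (LinearMap.rTensor D P.subtype))
    (πC : D →ₗ[k] C) (πP : D →ₗ[k] P)
    (hπC : πC ∘ₗ C.subtype = LinearMap.id)
    (hπP : πP ∘ₗ P.subtype = LinearMap.id)
    (hπCP : πC ∘ₗ P.subtype = 0)
    (hπPC : πP ∘ₗ C.subtype = 0)
    (hsum : C.subtype ∘ₗ πC + P.subtype ∘ₗ πP = LinearMap.id) :
    IsDorrohPairC
      (TensorProduct.map πC πC ∘ₗ Δ ∘ₗ C.subtype)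
      (TensorProduct.map πP πP ∘ₗ Δ ∘ₗ P.subtype)
      (TensorProduct.map πC πP ∘ₗ Δ ∘ₗ P.subtype)
      (TensorProduct.map πP πC ∘ₗ Δ ∘ₗ P.subtype) ∧
    Function.Bijective
      (C.subtype ∘ₗ LinearMap.fst k C P + P.subtype ∘ₗ LinearMap.snd k C P) ∧
    TensorProduct.map
        (C.subtype ∘ₗ LinearMap.fst k C P + P.subtype ∘ₗ LinearMap.snd k C P)
        (C.subtype ∘ₗ LinearMap.fst k C P + P.subtype ∘ₗ LinearMap.snd k C P) ∘ₗ
      dorrohComul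
        (TensorProduct.map πC πC ∘ₗ Δ ∘ₗ C.subtype)
        (TensorProduct.map πP πP ∘ₗ Δ ∘ₗ P.subtype)
        (TensorProduct.map πC πP ∘ₗ Δ ∘ₗ P.subtype)
        (TensorProduct.map πP πC ∘ₗ Δ ∘ₗ P.subtype) =
    Δ ∘ₗ (C.subtype ∘ₗ LinearMap.fst k C P + P.subtype ∘ₗ LinearMap.snd k C P) := by
  classical
  set φ : (↥C × ↥P) →ₗ[k] D :=
    C.subtype ∘ₗ LinearMap.fst k ↥C ↥P + P.subtype ∘ₗ LinearMap.snd k ↥C ↥P with hφ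
  set ψ : D →ₗ[k] (↥C × ↥P) :=
    LinearMap.inl k ↥C ↥P ∘ₗ πC + LinearMap.inr k ↥C ↥P ∘ₗ πP with hψ
  have hφψ : φ ∘ₗ ψ = LinearMap.id := by
    apply LinearMap.ext
    intro d
    have hs := DFunLike.congr_fun hsum d
    simp only [LinearMap.add_apply, LinearMap.comp_apply, LinearMap.id_apply,
      Submodule.subtype_apply] at hs
    simp [hφ, hψ, hs]
  have hψφ : ψ ∘ₗ φ = LinearMap.id := by
    apply LinearMap.ext
    rintro ⟨c, p⟩
    have h1 := DFunLike.congr_fun hπC c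
    have h2 := DFunLike.congr_fun hπP p
    have h3 := DFunLike.congr_fun hπCP p
    have h4 := DFunLike.congr_fun hπPC c
    simp only [LinearMap.comp_apply, LinearMap.id_apply, LinearMap.zero_apply,
      Submodule.subtype_apply] at h1 h2 h3 h4
    simp [hφ, hψ, map_add, h1, h2, h3, h4, Prod.ext_iff]
  have hB1 : TensorProduct.map πC πP ∘ₗ Δ ∘ₗ C.subtype = 0 := by
    ext c
    obtain ⟨t, ht⟩ := hC (C.subtype c) c.2
    simp only [LinearMap.comp_apply, LinearMap.zero_apply]
    rw [← ht, ← LinearMap.comp_apply, ← TensorProduct.map_comp, hπPC,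
      TensorProduct.map_zero_right, LinearMap.zero_apply]
  have hB2 : TensorProduct.map πP πC ∘ₗ Δ ∘ₗ C.subtype = 0 := by
    ext c
    obtain ⟨t, ht⟩ := hC (C.subtype c) c.2
    simp only [LinearMap.comp_apply, LinearMap.zero_apply]
    rw [← ht, ← LinearMap.comp_apply, ← TensorProduct.map_comp, hπPC,
      TensorProduct.map_zero_left, LinearMap.zero_apply]
  have hB3 : TensorProduct.map πP πP ∘ₗ Δ ∘ₗ C.subtype = 0 := by
    ext c
    obtain ⟨t, ht⟩ := hC (C.subtype c) c.2
    simp only [LinearMap.comp_apply, LinearMap.zero_apply]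
    rw [← ht, ← LinearMap.comp_apply, ← TensorProduct.map_comp, hπPC,
      TensorProduct.map_zero_left, LinearMap.zero_apply]
  have hA : TensorProduct.map πC πC ∘ₗ Δ ∘ₗ P.subtype = 0 := by
    ext p
    have hm := hP (P.subtype p) p.2
    rw [Submodule.mem_sup] at hm
    obtain ⟨x, hx, y, hy, hxy⟩ := hm
    obtain ⟨x', rfl⟩ := hx
    obtain ⟨y', rfl⟩ := hy
    simp only [LinearMap.comp_apply, LinearMap.zero_apply]
    rw [← hxy, map_add]
    have e1 : TensorProduct.map πC πC (LinearMap.lTensor D P.subtype x') = 0 := by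
      rw [← LinearMap.comp_apply, LinearMap.map_comp_lTensor, hπCP,
        TensorProduct.map_zero_right, LinearMap.zero_apply]
    have e2 : TensorProduct.map πC πC (LinearMap.rTensor D P.subtype y') = 0 := by
      rw [← LinearMap.comp_apply, LinearMap.map_comp_rTensor, hπCP,
        TensorProduct.map_zero_left, LinearMap.zero_apply]
    rw [e1, e2, add_zero]
  have hφl : φ ∘ₗ LinearMap.inl k ↥C ↥P = C.subtype := by
    apply LinearMap.ext
    intro c
    simp [hφ]
  have hφr : φ ∘ₗ LinearMap.inr k ↥C ↥P = P.subtype := by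
    apply LinearMap.ext
    intro p
    simp [hφ]
  have hΔ'eq : TensorProduct.map ψ ψ ∘ₗ Δ ∘ₗ φ =
      dorrohComul
        (TensorProduct.map πC πC ∘ₗ Δ ∘ₗ C.subtype)
        (TensorProduct.map πP πP ∘ₗ Δ ∘ₗ P.subtype)
        (TensorProduct.map πC πP ∘ₗ Δ ∘ₗ P.subtype)
        (TensorProduct.map πP πC ∘ₗ Δ ∘ₗ P.subtype) := by
    apply LinearMap.prod_ext
    · rw [dc_inl]
      simp only [LinearMap.comp_assoc]
      rw [hφl, hψ]
      simp only [TensorProduct.map_add_left, TensorProduct.map_add_right,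
        LinearMap.add_comp, TensorProduct.map_comp, LinearMap.comp_assoc,
        hB1, hB2, hB3, LinearMap.comp_zero, add_zero, zero_add]
    · rw [dc_inr]
      simp only [LinearMap.comp_assoc]
      rw [hφr, hψ]
      simp only [TensorProduct.map_add_left, TensorProduct.map_add_right,
        LinearMap.add_comp, TensorProduct.map_comp, LinearMap.comp_assoc,
        hA, LinearMap.comp_zero, add_zero, zero_add]
      abel
  have hconj := coassoc_conj Δ hΔ φ ψ hφψ
  rw [hΔ'eq] at hconj
  refine ⟨isDorrohPair_of_coassoc _ _ _ _ hconj, ?_, ?_⟩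
  · refine Function.bijective_iff_has_inverse.mpr ⟨ψ, fun x => ?_, fun x => ?_⟩
    · have := DFunLike.congr_fun hψφ x
      simpa using this
    · have := DFunLike.congr_fun hφψ x
      simpa using this
  rw [← hΔ'eq, map_comp_reassoc, hφψ, TensorProduct.map_id, LinearMap.id_comp]

end
end

section
/- Let (C, P) be a Dorroh pair of coalgebras over a field k, and suppose the coalgebra P has a counit ε_P (i.e. (ε_P⊗id)Δ_P = id = (id⊗ε_P)Δ_P). Then (id_C ⊗ ε_P)∘ρ_l = (ε_P ⊗ id_C)∘ρ_r as linear maps P → C; in Sweedler notation, Σ p₍₋₁₎ε_P(p₍₀₎) = Σ ε_P(p₍₀₎)p₍₁₎ for all p ∈ P. -/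
open TensorProduct

section

variable {k : Type} [Field k] {C P : Type}
  [AddCommGroup C] [Module k C] [AddCommGroup P] [Module k P]

/-- **Proposition 2.4.** If `(C, P)` is a Dorroh pair of coalgebras and `P` has a counit `ε_P`,
then `(id_C ⊗ ε_P) ∘ ρ_l = (ε_P ⊗ id_C) ∘ ρ_r`, i.e.
`Σ p₍₋₁₎ ε_P(p₍₀₎) = Σ ε_P(p₍₀₎) p₍₁₎` for all `p ∈ P`. -/
theorem dorroh_counit_left_right (ΔC : C →ₗ[k] C ⊗[k] C) (ΔP : P →ₗ[k] P ⊗[k] P)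
    (ρl : P →ₗ[k] C ⊗[k] P) (ρr : P →ₗ[k] P ⊗[k] C)
    (h : IsDorrohPairC ΔC ΔP ρl ρr)
    (εP : P →ₗ[k] k)
    (hε1 : (TensorProduct.lid k P).toLinearMap ∘ₗ εP.rTensor P ∘ₗ ΔP = LinearMap.id)
    (hε2 : (TensorProduct.rid k P).toLinearMap ∘ₗ εP.lTensor P ∘ₗ ΔP = LinearMap.id) :
    (TensorProduct.rid k C).toLinearMap ∘ₗ εP.lTensor C ∘ₗ ρl =
      (TensorProduct.lid k C).toLinearMap ∘ₗ εP.rTensor C ∘ₗ ρr := by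
  obtain ⟨-, -, -, -, -, -, -, h8⟩ := h
  set g : C ⊗[k] P →ₗ[k] C := (TensorProduct.rid k C).toLinearMap ∘ₗ εP.lTensor C with hg
  set m : P ⊗[k] C →ₗ[k] C := (TensorProduct.lid k C).toLinearMap ∘ₗ εP.rTensor C with hm
  -- auxiliary counit identities
  have lemA : ∀ f : P →ₗ[k] C, g ∘ₗ f.rTensor P ∘ₗ ΔP = f := by
    intro f
    have key : g ∘ₗ f.rTensor P
        = f ∘ₗ (TensorProduct.rid k P).toLinearMap ∘ₗ εP.lTensor P := by
      apply TensorProduct.ext'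
      intro p q
      simp [hg, TensorProduct.smul_tmul']
    rw [← LinearMap.comp_assoc, key, LinearMap.comp_assoc, LinearMap.comp_assoc, hε2,
      LinearMap.comp_id]
  have lemB : ∀ f : P →ₗ[k] C, m ∘ₗ f.lTensor P ∘ₗ ΔP = f := by
    intro f
    have key : m ∘ₗ f.lTensor P
        = f ∘ₗ (TensorProduct.lid k P).toLinearMap ∘ₗ εP.rTensor P := by
      apply TensorProduct.ext'
      intro p q
      simp [hm]
    rw [← LinearMap.comp_assoc, key, LinearMap.comp_assoc, LinearMap.comp_assoc, hε1,
      LinearMap.comp_id]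
  set F : P ⊗[k] (C ⊗[k] P) →ₗ[k] C := m ∘ₗ g.lTensor P with hF
  have hassoc : F ∘ₗ (TensorProduct.assoc k P C P).toLinearMap = g ∘ₗ m.rTensor P := by
    apply TensorProduct.ext'
    intro x q
    refine TensorProduct.induction_on x (by simp) (fun p c => ?_) (fun a b ha hb => ?_)
    · simp [hF, hg, hm, TensorProduct.smul_tmul', mul_smul, mul_comm]
    · simp only [TensorProduct.add_tmul, map_add, ha, hb]
  have hL : F ∘ₗ ρl.lTensor P ∘ₗ ΔP = g ∘ₗ ρl := by
    have e : F ∘ₗ ρl.lTensor P = m ∘ₗ (g ∘ₗ ρl).lTensor P := by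
      rw [hF, LinearMap.comp_assoc, ← LinearMap.lTensor_comp]
    rw [← LinearMap.comp_assoc, e, LinearMap.comp_assoc]
    exact lemB (g ∘ₗ ρl)
  have hR : F ∘ₗ ((TensorProduct.assoc k P C P).toLinearMap ∘ₗ ρr.rTensor P ∘ₗ ΔP)
      = m ∘ₗ ρr := by
    rw [← LinearMap.comp_assoc, hassoc, LinearMap.comp_assoc,
      ← LinearMap.comp_assoc ΔP (LinearMap.rTensor P ρr) (LinearMap.rTensor P m),
      ← LinearMap.rTensor_comp, LinearMap.comp_assoc]
    exact lemA (m ∘ₗ ρr)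
  show g ∘ₗ ρl = m ∘ₗ ρr
  calc g ∘ₗ ρl = F ∘ₗ ρl.lTensor P ∘ₗ ΔP := hL.symm
    _ = F ∘ₗ ((TensorProduct.assoc k P C P).toLinearMap ∘ₗ ρr.rTensor P ∘ₗ ΔP) := by rw [h8]
    _ = m ∘ₗ ρr := hR

end
end

section
/- Let (C, P) be a Dorroh pair of coalgebras over a field k, and suppose the coalgebra P has a counit ε_P. Then the map ζ : C⋉_d P → C × P defined by ζ(c, p) = (c − Σ p₍₋₁₎ε_P(p₍₀₎), p) is a coalgebra isomorphism from the Dorroh extension C⋉_d P onto the direct product coalgebra C × P, whose comultiplication is Δ_×(c,p) = Σ (c₁,0)⊗(c₂,0) + Σ (0,p₁)⊗(0,p₂). -/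
open TensorProduct

section

variable {k : Type} [Field k] {C P : Type}
  [AddCommGroup C] [Module k C] [AddCommGroup P] [Module k P]

/-- The comultiplication of the direct product coalgebra `C × P`:
`Δ_×(c,p) = Σ (c₁,0)⊗(c₂,0) + Σ (0,p₁)⊗(0,p₂)`. -/
noncomputable def prodComul (ΔC : C →ₗ[k] C ⊗[k] C) (ΔP : P →ₗ[k] P ⊗[k] P) :
    (C × P) →ₗ[k] (C × P) ⊗[k] (C × P) :=
  TensorProduct.map (LinearMap.inl k C P) (LinearMap.inl k C P) ∘ₗ ΔC ∘ₗ LinearMap.fst k C P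
  + TensorProduct.map (LinearMap.inr k C P) (LinearMap.inr k C P) ∘ₗ ΔP ∘ₗ LinearMap.snd k C P


section DorrohAux
variable {k : Type} [Field k] {X Y X' Y' P : Type}
  [AddCommGroup X] [Module k X] [AddCommGroup Y] [Module k Y]
  [AddCommGroup X'] [Module k X'] [AddCommGroup Y'] [Module k Y']
  [AddCommGroup P] [Module k P]

private lemma dorrohAuxE2 (ε : P →ₗ[k] k) :
    (LinearMap.lTensor X ((TensorProduct.rid k Y).toLinearMap ∘ₗ ε.lTensor Y)) ∘ₗ
      (TensorProduct.assoc k X Y P).toLinearMap =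
    (TensorProduct.rid k (X ⊗[k] Y)).toLinearMap ∘ₗ ε.lTensor (X ⊗[k] Y) := by
  apply TensorProduct.ext'
  intro xy p
  induction xy using TensorProduct.induction_on with
  | zero => simp
  | tmul x y => simp [tmul_smul, smul_tmul]
  | add a b ha hb => simp_all [add_tmul]

private lemma dorrohAuxE1 (ε : P →ₗ[k] k) :
    (LinearMap.lTensor X ((TensorProduct.lid k Y).toLinearMap ∘ₗ ε.rTensor Y)) ∘ₗ
      (TensorProduct.assoc k X P Y).toLinearMap =
    ((TensorProduct.rid k X).toLinearMap ∘ₗ ε.lTensor X).rTensor Y := by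
  apply TensorProduct.ext'
  intro xp y
  induction xp using TensorProduct.induction_on with
  | zero => simp
  | tmul x p => simp [tmul_smul, smul_tmul]
  | add a b ha hb => simp_all [add_tmul]

private lemma dorrohAuxN (ε : P →ₗ[k] k) (f : X →ₗ[k] Y) :
    ((TensorProduct.rid k Y).toLinearMap ∘ₗ ε.lTensor Y) ∘ₗ f.rTensor P =
    f ∘ₗ (TensorProduct.rid k X).toLinearMap ∘ₗ ε.lTensor X := by
  apply TensorProduct.ext'
  intro x p
  simp

private lemma dorrohMapSubLeft (f f' : X →ₗ[k] X') (g : Y →ₗ[k] Y') :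
    TensorProduct.map (f - f') g = TensorProduct.map f g - TensorProduct.map f' g := by
  apply TensorProduct.ext'
  intro x y
  simp [TensorProduct.sub_tmul]

private lemma dorrohMapSubRight (f : X →ₗ[k] X') (g g' : Y →ₗ[k] Y') :
    TensorProduct.map f (g - g') = TensorProduct.map f g - TensorProduct.map f g' := by
  apply TensorProduct.ext'
  intro x y
  simp [TensorProduct.tmul_sub]

private lemma dorrohMapSubSub (f f' : X →ₗ[k] X') (g g' : Y →ₗ[k] Y') :
    TensorProduct.map (f - f') (g - g') =
      TensorProduct.map f g - TensorProduct.map f' g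
        - TensorProduct.map f g' + TensorProduct.map f' g' := by
  apply TensorProduct.ext'
  intro x y
  simp only [TensorProduct.map_tmul, LinearMap.sub_apply, LinearMap.add_apply,
    TensorProduct.sub_tmul, TensorProduct.tmul_sub]
  abel

end DorrohAux

/-- **Proposition 2.8.** If `(C, P)` is a Dorroh pair of coalgebras and `P` has a counit `ε_P`,
then `ζ(c, p) = (c − Σ p₍₋₁₎ ε_P(p₍₀₎), p)` is a coalgebra isomorphism
`C ⋉_d P ≅ C × P` onto the direct product coalgebra. -/
theorem dorroh_iso_prod_of_counital (ΔC : C →ₗ[k] C ⊗[k] C) (ΔP : P →ₗ[k] P ⊗[k] P)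
    (ρl : P →ₗ[k] C ⊗[k] P) (ρr : P →ₗ[k] P ⊗[k] C)
    (h : IsDorrohPairC ΔC ΔP ρl ρr)
    (εP : P →ₗ[k] k)
    (hε1 : (TensorProduct.lid k P).toLinearMap ∘ₗ εP.rTensor P ∘ₗ ΔP = LinearMap.id)
    (hε2 : (TensorProduct.rid k P).toLinearMap ∘ₗ εP.lTensor P ∘ₗ ΔP = LinearMap.id) :
    Function.Bijective
      (LinearMap.prod
        (LinearMap.fst k C P -
          ((TensorProduct.rid k C).toLinearMap ∘ₗ εP.lTensor C ∘ₗ ρl) ∘ₗ LinearMap.snd k C P)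
        (LinearMap.snd k C P)) ∧
    TensorProduct.map
        (LinearMap.prod
          (LinearMap.fst k C P -
            ((TensorProduct.rid k C).toLinearMap ∘ₗ εP.lTensor C ∘ₗ ρl) ∘ₗ LinearMap.snd k C P)
          (LinearMap.snd k C P))
        (LinearMap.prod
          (LinearMap.fst k C P -
            ((TensorProduct.rid k C).toLinearMap ∘ₗ εP.lTensor C ∘ₗ ρl) ∘ₗ LinearMap.snd k C P)
          (LinearMap.snd k C P)) ∘ₗ
      dorrohComul ΔC ΔP ρl ρr =
    prodComul ΔC ΔP ∘ₗ
      LinearMap.prod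
        (LinearMap.fst k C P -
          ((TensorProduct.rid k C).toLinearMap ∘ₗ εP.lTensor C ∘ₗ ρl) ∘ₗ LinearMap.snd k C P)
        (LinearMap.snd k C P) := by
  obtain ⟨-, -, h3, -, -, -, h7, h8⟩ := h
  set G : P →ₗ[k] C := (TensorProduct.rid k C).toLinearMap ∘ₗ εP.lTensor C ∘ₗ ρl with hG
  set Z : C × P →ₗ[k] C × P :=
    LinearMap.prod (LinearMap.fst k C P - G ∘ₗ LinearMap.snd k C P) (LinearMap.snd k C P) with hZ
  have L1 : G.rTensor P ∘ₗ ΔP = ρl := by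
    have h := congrArg (fun m =>
      (LinearMap.lTensor C ((TensorProduct.lid k P).toLinearMap ∘ₗ εP.rTensor P)) ∘ₗ m) h7
    simp only [← LinearMap.comp_assoc] at h
    rw [dorrohAuxE1] at h
    rw [← LinearMap.lTensor_comp, ← LinearMap.rTensor_comp] at h
    simp only [LinearMap.comp_assoc] at h
    rw [hε1, LinearMap.lTensor_id, LinearMap.id_comp] at h
    exact h
  have L2 : G.lTensor P ∘ₗ ΔP = ρr := by
    have h := congrArg (fun m =>
      (LinearMap.lTensor P ((TensorProduct.rid k C).toLinearMap ∘ₗ εP.lTensor C)) ∘ₗ m) h8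
    simp only [← LinearMap.comp_assoc] at h
    rw [dorrohAuxE2, dorrohAuxN εP ρr, ← LinearMap.lTensor_comp] at h
    simp only [LinearMap.comp_assoc] at h
    rw [hε2, LinearMap.comp_id] at h
    exact h.symm
  have L3 : ΔC ∘ₗ G = G.lTensor C ∘ₗ ρl := by
    have h := congrArg (fun m =>
      (LinearMap.lTensor C ((TensorProduct.rid k C).toLinearMap ∘ₗ εP.lTensor C)) ∘ₗ m) h3
    simp only [← LinearMap.comp_assoc] at h
    rw [dorrohAuxE2, dorrohAuxN εP ΔC, ← LinearMap.lTensor_comp] at h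
    simp only [LinearMap.comp_assoc] at h
    exact h
  have d1 : G.lTensor C ∘ₗ ρl = TensorProduct.map G G ∘ₗ ΔP := by
    rw [← L1, ← LinearMap.comp_assoc, LinearMap.lTensor_comp_rTensor]
  have d2 : G.rTensor C ∘ₗ ρr = TensorProduct.map G G ∘ₗ ΔP := by
    rw [← L2, ← LinearMap.comp_assoc, LinearMap.rTensor_comp_lTensor]
  have d3 : ΔC ∘ₗ G = TensorProduct.map G G ∘ₗ ΔP := L3.trans d1
  constructor
  · rw [Function.bijective_iff_has_inverse]
    refine ⟨fun x => (x.1 + G x.2, x.2), fun x => ?_, fun x => ?_⟩ <;>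
      simp [hZ, LinearMap.prod_apply, Pi.prod]
  · have f1 : Z ∘ₗ LinearMap.inl k C P = LinearMap.inl k C P := by
      rw [hZ]
      ext c <;> simp
    have f2 : Z ∘ₗ LinearMap.inr k C P = LinearMap.inr k C P - LinearMap.inl k C P ∘ₗ G := by
      rw [hZ]
      ext p <;> simp
    have m1 : TensorProduct.map Z Z ∘ₗ
        TensorProduct.map (LinearMap.inl k C P) (LinearMap.inl k C P) =
        TensorProduct.map (LinearMap.inl k C P) (LinearMap.inl k C P) := by
      rw [← TensorProduct.map_comp, f1]
    have m2 : TensorProduct.map Z Z ∘ₗ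
        TensorProduct.map (LinearMap.inl k C P) (LinearMap.inr k C P) =
        TensorProduct.map (LinearMap.inl k C P) (LinearMap.inr k C P)
          - TensorProduct.map (LinearMap.inl k C P) (LinearMap.inl k C P) ∘ₗ G.lTensor C := by
      rw [← TensorProduct.map_comp, f1, f2, dorrohMapSubRight, LinearMap.map_comp_lTensor]
    have m3 : TensorProduct.map Z Z ∘ₗ
        TensorProduct.map (LinearMap.inr k C P) (LinearMap.inl k C P) =
        TensorProduct.map (LinearMap.inr k C P) (LinearMap.inl k C P)
          - TensorProduct.map (LinearMap.inl k C P) (LinearMap.inl k C P) ∘ₗ G.rTensor C := by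
      rw [← TensorProduct.map_comp, f1, f2, dorrohMapSubLeft, LinearMap.map_comp_rTensor]
    have m4 : TensorProduct.map Z Z ∘ₗ
        TensorProduct.map (LinearMap.inr k C P) (LinearMap.inr k C P) =
        TensorProduct.map (LinearMap.inr k C P) (LinearMap.inr k C P)
          - TensorProduct.map (LinearMap.inl k C P) (LinearMap.inr k C P) ∘ₗ G.rTensor P
          - TensorProduct.map (LinearMap.inr k C P) (LinearMap.inl k C P) ∘ₗ G.lTensor P
          + TensorProduct.map (LinearMap.inl k C P) (LinearMap.inl k C P) ∘ₗ
              TensorProduct.map G G := by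
      rw [← TensorProduct.map_comp, f2, dorrohMapSubSub, LinearMap.map_comp_lTensor,
        LinearMap.map_comp_rTensor, TensorProduct.map_comp]
    apply LinearMap.prod_ext
    · simp only [dorrohComul, prodComul, LinearMap.add_comp, LinearMap.comp_assoc,
        LinearMap.fst_comp_inl, LinearMap.snd_comp_inl, LinearMap.comp_id,
        LinearMap.comp_zero, LinearMap.zero_comp, add_zero, zero_add, f1]
      rw [← LinearMap.comp_assoc, m1]
    · have r1 : prodComul ΔC ΔP ∘ₗ LinearMap.inl k C P =
          TensorProduct.map (LinearMap.inl k C P) (LinearMap.inl k C P) ∘ₗ ΔC := by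
        simp only [prodComul, LinearMap.add_comp, LinearMap.comp_assoc,
          LinearMap.fst_comp_inl, LinearMap.snd_comp_inl, LinearMap.comp_id,
          LinearMap.comp_zero, add_zero]
      have r3 : prodComul ΔC ΔP ∘ₗ LinearMap.inr k C P =
          TensorProduct.map (LinearMap.inr k C P) (LinearMap.inr k C P) ∘ₗ ΔP := by
        simp only [prodComul, LinearMap.add_comp, LinearMap.comp_assoc,
          LinearMap.fst_comp_inr, LinearMap.snd_comp_inr, LinearMap.comp_id,
          LinearMap.comp_zero, zero_add]
      have r2 : prodComul ΔC ΔP ∘ₗ (LinearMap.inl k C P ∘ₗ G) =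
          TensorProduct.map (LinearMap.inl k C P) (LinearMap.inl k C P) ∘ₗ
            (TensorProduct.map G G ∘ₗ ΔP) := by
        rw [← LinearMap.comp_assoc, r1, LinearMap.comp_assoc, d3]
      simp only [dorrohComul, LinearMap.add_comp, LinearMap.comp_assoc,
        LinearMap.fst_comp_inr, LinearMap.snd_comp_inr, LinearMap.comp_id,
        LinearMap.comp_zero, LinearMap.zero_comp, add_zero, zero_add,
        LinearMap.comp_add]
      rw [f2, LinearMap.comp_sub, r3, r2]
      simp only [← LinearMap.comp_assoc]
      rw [m2, m3, m4]
      simp only [LinearMap.sub_comp, LinearMap.add_comp, LinearMap.comp_assoc]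
      rw [L1, L2, d1, d2]
      abel

end
end

section
/- Let (C, P) be a Dorroh pair of coalgebras over a field k, let D be a coalgebra, and let φ : D → C and f : D → P be coalgebra homomorphisms (φ⊗φ)Δ_D = Δ_C φ, (f⊗f)Δ_D = Δ_P f satisfying (φ⊗f)Δ_D = ρ_l∘f and (f⊗φ)Δ_D = ρ_r∘f. Then η : D → C⋉_d P defined by η(d) = (φ(d), f(d)) is the unique coalgebra homomorphism with π_C∘η = φ and π_P∘η = f, where π_C and π_P are the projections of C⋉_d P onto C and P. -/
open TensorProduct

section

variable {k : Type} [Field k] {C P : Type}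
  [AddCommGroup C] [Module k C] [AddCommGroup P] [Module k P]

/-- **Universal property of `C ⋉_d P`.** Given a Dorroh pair of coalgebras `(C, P)`, a
coalgebra `D`, and coalgebra homomorphisms `φ : D → C`, `f : D → P` with
`(φ⊗f)Δ_D = ρ_l f` and `(f⊗φ)Δ_D = ρ_r f`, the map `η(d) = (φ(d), f(d))` is the unique
coalgebra homomorphism `D → C ⋉_d P` with `π_C η = φ` and `π_P η = f`. -/
theorem dorroh_universal_coalgebra {D : Type} [AddCommGroup D] [Module k D]
    (ΔC : C →ₗ[k] C ⊗[k] C) (ΔP : P →ₗ[k] P ⊗[k] P)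
    (ρl : P →ₗ[k] C ⊗[k] P) (ρr : P →ₗ[k] P ⊗[k] C)
    (h : IsDorrohPairC ΔC ΔP ρl ρr)
    (ΔD : D →ₗ[k] D ⊗[k] D) (hD : Coassoc ΔD)
    (φ : D →ₗ[k] C) (f : D →ₗ[k] P)
    (hφ : TensorProduct.map φ φ ∘ₗ ΔD = ΔC ∘ₗ φ)
    (hf : TensorProduct.map f f ∘ₗ ΔD = ΔP ∘ₗ f)
    (hl : TensorProduct.map φ f ∘ₗ ΔD = ρl ∘ₗ f)
    (hr : TensorProduct.map f φ ∘ₗ ΔD = ρr ∘ₗ f) :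
    (TensorProduct.map (LinearMap.prod φ f) (LinearMap.prod φ f) ∘ₗ ΔD =
        dorrohComul ΔC ΔP ρl ρr ∘ₗ LinearMap.prod φ f ∧
      LinearMap.fst k C P ∘ₗ LinearMap.prod φ f = φ ∧
      LinearMap.snd k C P ∘ₗ LinearMap.prod φ f = f) ∧
    ∀ η : D →ₗ[k] C × P,
      (TensorProduct.map η η ∘ₗ ΔD = dorrohComul ΔC ΔP ρl ρr ∘ₗ η ∧
        LinearMap.fst k C P ∘ₗ η = φ ∧ LinearMap.snd k C P ∘ₗ η = f) →
      η = LinearMap.prod φ f := by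

  constructor
  · refine ⟨?_, LinearMap.fst_prod φ f, LinearMap.snd_prod φ f⟩
    have hprod : LinearMap.prod φ f
        = LinearMap.inl k C P ∘ₗ φ + LinearMap.inr k C P ∘ₗ f := by
      ext d <;> simp
    rw [hprod]
    rw [TensorProduct.map_add_left, TensorProduct.map_add_right,
      TensorProduct.map_add_right]
    rw [TensorProduct.map_comp, TensorProduct.map_comp,
      TensorProduct.map_comp, TensorProduct.map_comp]
    unfold dorrohComul
    simp only [LinearMap.add_comp, LinearMap.comp_assoc, LinearMap.fst_prod,
      LinearMap.snd_prod]
    rw [hφ, hf, hl, hr]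
    simp only [LinearMap.comp_assoc, ← hprod, LinearMap.fst_prod, LinearMap.snd_prod]
    abel
  · rintro η ⟨-, h1, h2⟩
    ext d
    · exact LinearMap.congr_fun h1 d
    · exact LinearMap.congr_fun h2 d


end
end

section
/- Let (C, P) be a Dorroh pair of coalgebras over a field k and M a k-vector space. Then M carries a left C⋉_d P-comodule structure (a linear map ρ : M → (C⋉_d P)⊗M with (Δ⊗id)ρ = (id⊗ρ)ρ) if and only if M carries a left C-comodule structure ρ_l^C : M → C⊗M and a left P-comodule structure ρ_l^P : M → P⊗M satisfying (id⊗ρ_l^C)ρ_l^P = (ρ_r⊗id)ρ_l^P and (id⊗ρ_l^P)ρ_l^C = (ρ_l⊗id)ρ_l^P; the correspondence is ρ(m) = Σ (m₍₋₁₎,0)⊗m₍₀₎ + Σ (0,m₍₋₁₎')⊗m₍₀₎', where ρ_l^C(m) = Σ m₍₋₁₎⊗m₍₀₎ and ρ_l^P(m) = Σ m₍₋₁₎'⊗m₍₀₎'. -/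
open TensorProduct

section

variable {k : Type} [Field k] {C P : Type}
  [AddCommGroup C] [Module k C] [AddCommGroup P] [Module k P]

/-- `ρ` is a left comodule structure over the comultiplication `Δ`. -/
def IsLeftComodule {M : Type} [AddCommGroup M] [Module k M]
    (Δ : C →ₗ[k] C ⊗[k] C) (ρ : M →ₗ[k] C ⊗[k] M) : Prop :=
  (TensorProduct.assoc k C C M).toLinearMap ∘ₗ Δ.rTensor M ∘ₗ ρ = ρ.lTensor C ∘ₗ ρ

/-!
Projecting both tensor factors of `(C × P) ⊗ ((C × P) ⊗ M)` onto `C` and `P` splits the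
coassociativity of a coaction `ρ` of `C ⋉_d P` into four equations, one for each block
`ΔC`, `ρl`, `ρr`, `ΔP` of the Dorroh comultiplication. These say precisely that the `C`-part
and the `P`-part of `ρ` are comodules satisfying the two compatibility conditions, and `ρ` is
the sum of its parts.
-/

section ProdTensor

variable {R : Type*} [CommSemiring R] {A B X Y M N : Type*}
  [AddCommMonoid A] [Module R A] [AddCommMonoid B] [Module R B]
  [AddCommMonoid X] [Module R X] [AddCommMonoid Y] [Module R Y]
  [AddCommMonoid M] [Module R M] [AddCommMonoid N] [Module R N]

open LinearMap

theorem LinearMap.inl_comp_fst_add_inr_comp_snd :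
    inl R A B ∘ₗ fst R A B + inr R A B ∘ₗ snd R A B = LinearMap.id := by
  ext <;> simp

theorem LinearMap.rTensor_inl_comp_fst_add_rTensor_inr_comp_snd :
    (inl R A B).rTensor M ∘ₗ (fst R A B).rTensor M +
      (inr R A B).rTensor M ∘ₗ (snd R A B).rTensor M = LinearMap.id := by
  rw [← rTensor_comp, ← rTensor_comp, ← rTensor_add, inl_comp_fst_add_inr_comp_snd,
    rTensor_id]

theorem LinearMap.eq_rTensor_inl_comp_add_rTensor_inr_comp (F : N →ₗ[R] (A × B) ⊗[R] M) :
    F = (inl R A B).rTensor M ∘ₗ ((fst R A B).rTensor M ∘ₗ F) +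
      (inr R A B).rTensor M ∘ₗ ((snd R A B).rTensor M ∘ₗ F) := by
  rw [← comp_assoc, ← comp_assoc, ← add_comp, rTensor_inl_comp_fst_add_rTensor_inr_comp_snd,
    id_comp]

theorem LinearMap.rTensor_fst_comp_inl_add_inr (F : N →ₗ[R] A ⊗[R] M)
    (G : N →ₗ[R] B ⊗[R] M) :
    (fst R A B).rTensor M ∘ₗ ((inl R A B).rTensor M ∘ₗ F + (inr R A B).rTensor M ∘ₗ G) =
      F := by
  simp [comp_add, ← comp_assoc, ← rTensor_comp]

theorem LinearMap.rTensor_snd_comp_inl_add_inr (F : N →ₗ[R] A ⊗[R] M)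
    (G : N →ₗ[R] B ⊗[R] M) :
    (snd R A B).rTensor M ∘ₗ ((inl R A B).rTensor M ∘ₗ F + (inr R A B).rTensor M ∘ₗ G) =
      G := by
  simp [comp_add, ← comp_assoc, ← rTensor_comp]

theorem TensorProduct.prod_prod_ext_iff {F G : N →ₗ[R] (A × B) ⊗[R] ((A × B) ⊗[R] M)} :
    F = G ↔
      map (fst R A B) ((fst R A B).rTensor M) ∘ₗ F =
        map (fst R A B) ((fst R A B).rTensor M) ∘ₗ G ∧
      map (fst R A B) ((snd R A B).rTensor M) ∘ₗ F =
        map (fst R A B) ((snd R A B).rTensor M) ∘ₗ G ∧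
      map (snd R A B) ((fst R A B).rTensor M) ∘ₗ F =
        map (snd R A B) ((fst R A B).rTensor M) ∘ₗ G ∧
      map (snd R A B) ((snd R A B).rTensor M) ∘ₗ F =
        map (snd R A B) ((snd R A B).rTensor M) ∘ₗ G := by
  refine ⟨by rintro rfl; simp, fun ⟨hff, hfs, hsf, hss⟩ => ?_⟩
  have hid : map (inl R A B ∘ₗ fst R A B + inr R A B ∘ₗ snd R A B)
      ((inl R A B ∘ₗ fst R A B + inr R A B ∘ₗ snd R A B).rTensor M) = LinearMap.id := by
    rw [inl_comp_fst_add_inr_comp_snd, rTensor_id, map_id]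
  rw [← id_comp F, ← id_comp G, ← hid]
  simp only [map_add_left, map_add_right, rTensor_add, rTensor_comp, map_comp, add_comp,
    comp_assoc, hff, hfs, hsf, hss]

theorem TensorProduct.map_rTensor_comp_assoc_comp_rTensor (Δ : A →ₗ[R] A ⊗[R] A)
    (ρ : N →ₗ[R] A ⊗[R] M) (f : A →ₗ[R] X) (g : A →ₗ[R] Y) :
    map f (g.rTensor M) ∘ₗ
        ((TensorProduct.assoc R A A M).toLinearMap ∘ₗ Δ.rTensor M ∘ₗ ρ) =
      (TensorProduct.assoc R X Y M).toLinearMap ∘ₗ (map f g ∘ₗ Δ).rTensor M ∘ₗ ρ := by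
  calc _ = (map f (g.rTensor M) ∘ₗ (TensorProduct.assoc R A A M).toLinearMap) ∘ₗ
          Δ.rTensor M ∘ₗ ρ := (comp_assoc _ _ _).symm
    _ = ((TensorProduct.assoc R X Y M).toLinearMap ∘ₗ (map f g).rTensor M) ∘ₗ
          Δ.rTensor M ∘ₗ ρ := congrArg (· ∘ₗ _) (map_map_comp_assoc_eq f g LinearMap.id)
    _ = _ := by rw [rTensor_comp, comp_assoc, comp_assoc]

theorem TensorProduct.map_rTensor_comp_lTensor_comp (ρ : N →ₗ[R] A ⊗[R] M)
    (σ : M →ₗ[R] A ⊗[R] N) (f : A →ₗ[R] X) (g : A →ₗ[R] Y) :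
    map f (g.rTensor N) ∘ₗ (σ.lTensor A ∘ₗ ρ) =
      (g.rTensor N ∘ₗ σ).lTensor X ∘ₗ f.rTensor M ∘ₗ ρ := by
  rw [← comp_assoc, ← comp_assoc, map_comp_lTensor, lTensor_comp_rTensor]

end ProdTensor

section Dorroh

open LinearMap

variable (ΔC : C →ₗ[k] C ⊗[k] C) (ΔP : P →ₗ[k] P ⊗[k] P)
  (ρl : P →ₗ[k] C ⊗[k] P) (ρr : P →ₗ[k] P ⊗[k] C)

theorem map_fst_fst_comp_dorrohComul :
    map (fst k C P) (fst k C P) ∘ₗ dorrohComul ΔC ΔP ρl ρr = ΔC ∘ₗ fst k C P := by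
  simp [dorrohComul, comp_add, ← comp_assoc, ← map_comp]

theorem map_fst_snd_comp_dorrohComul :
    map (fst k C P) (snd k C P) ∘ₗ dorrohComul ΔC ΔP ρl ρr = ρl ∘ₗ snd k C P := by
  simp [dorrohComul, comp_add, ← comp_assoc, ← map_comp]

theorem map_snd_fst_comp_dorrohComul :
    map (snd k C P) (fst k C P) ∘ₗ dorrohComul ΔC ΔP ρl ρr = ρr ∘ₗ snd k C P := by
  simp [dorrohComul, comp_add, ← comp_assoc, ← map_comp]

theorem map_snd_snd_comp_dorrohComul :
    map (snd k C P) (snd k C P) ∘ₗ dorrohComul ΔC ΔP ρl ρr = ΔP ∘ₗ snd k C P := by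
  simp [dorrohComul, comp_add, ← comp_assoc, ← map_comp]

theorem isLeftComodule_dorrohComul_iff {M : Type} [AddCommGroup M] [Module k M]
    (ρ : M →ₗ[k] (C × P) ⊗[k] M) :
    IsLeftComodule (dorrohComul ΔC ΔP ρl ρr) ρ ↔
      IsLeftComodule ΔC ((fst k C P).rTensor M ∘ₗ ρ) ∧
      IsLeftComodule ΔP ((snd k C P).rTensor M ∘ₗ ρ) ∧
      ((fst k C P).rTensor M ∘ₗ ρ).lTensor P ∘ₗ ((snd k C P).rTensor M ∘ₗ ρ) =
        (TensorProduct.assoc k P C M).toLinearMap ∘ₗ ρr.rTensor M ∘ₗ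
          ((snd k C P).rTensor M ∘ₗ ρ) ∧
      ((snd k C P).rTensor M ∘ₗ ρ).lTensor C ∘ₗ ((fst k C P).rTensor M ∘ₗ ρ) =
        (TensorProduct.assoc k C P M).toLinearMap ∘ₗ ρl.rTensor M ∘ₗ
          ((snd k C P).rTensor M ∘ₗ ρ) := by
  rw [IsLeftComodule, TensorProduct.prod_prod_ext_iff]
  simp only [TensorProduct.map_rTensor_comp_assoc_comp_rTensor,
    TensorProduct.map_rTensor_comp_lTensor_comp, map_fst_fst_comp_dorrohComul,
    map_fst_snd_comp_dorrohComul, map_snd_fst_comp_dorrohComul, map_snd_snd_comp_dorrohComul,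
    rTensor_comp, comp_assoc, IsLeftComodule]
  exact ⟨fun ⟨hCC, hCP, hPC, hPP⟩ => ⟨hCC, hPP, hPC.symm, hCP.symm⟩,
    fun ⟨hCC, hPP, hPC, hCP⟩ => ⟨hCC, hCP.symm, hPC.symm, hPP⟩⟩

end Dorroh

theorem dorroh_left_comodule_general {M : Type} [AddCommGroup M] [Module k M]
    (ΔC : C →ₗ[k] C ⊗[k] C) (ΔP : P →ₗ[k] P ⊗[k] P)
    (ρl : P →ₗ[k] C ⊗[k] P) (ρr : P →ₗ[k] P ⊗[k] C) :
    (∀ ρ : M →ₗ[k] (C × P) ⊗[k] M,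
      IsLeftComodule (dorrohComul ΔC ΔP ρl ρr) ρ →
        IsLeftComodule ΔC ((LinearMap.fst k C P).rTensor M ∘ₗ ρ) ∧
        IsLeftComodule ΔP ((LinearMap.snd k C P).rTensor M ∘ₗ ρ) ∧
        (((LinearMap.fst k C P).rTensor M ∘ₗ ρ).lTensor P ∘ₗ
            ((LinearMap.snd k C P).rTensor M ∘ₗ ρ) =
          (TensorProduct.assoc k P C M).toLinearMap ∘ₗ ρr.rTensor M ∘ₗ
            ((LinearMap.snd k C P).rTensor M ∘ₗ ρ)) ∧
        (((LinearMap.snd k C P).rTensor M ∘ₗ ρ).lTensor C ∘ₗ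
            ((LinearMap.fst k C P).rTensor M ∘ₗ ρ) =
          (TensorProduct.assoc k C P M).toLinearMap ∘ₗ ρl.rTensor M ∘ₗ
            ((LinearMap.snd k C P).rTensor M ∘ₗ ρ)) ∧
        ρ = (LinearMap.inl k C P).rTensor M ∘ₗ ((LinearMap.fst k C P).rTensor M ∘ₗ ρ) +
            (LinearMap.inr k C P).rTensor M ∘ₗ ((LinearMap.snd k C P).rTensor M ∘ₗ ρ)) ∧
    (∀ (ρC : M →ₗ[k] C ⊗[k] M) (ρP : M →ₗ[k] P ⊗[k] M),
      IsLeftComodule ΔC ρC →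
      IsLeftComodule ΔP ρP →
      (ρC.lTensor P ∘ₗ ρP =
        (TensorProduct.assoc k P C M).toLinearMap ∘ₗ ρr.rTensor M ∘ₗ ρP) →
      (ρP.lTensor C ∘ₗ ρC =
        (TensorProduct.assoc k C P M).toLinearMap ∘ₗ ρl.rTensor M ∘ₗ ρP) →
      IsLeftComodule (dorrohComul ΔC ΔP ρl ρr)
        ((LinearMap.inl k C P).rTensor M ∘ₗ ρC + (LinearMap.inr k C P).rTensor M ∘ₗ ρP)) := by
  refine ⟨fun ρ hρ => ?_, fun ρC ρP hC hP hPC hCP => ?_⟩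
  · obtain ⟨hC, hP, hPC, hCP⟩ := (isLeftComodule_dorrohComul_iff ΔC ΔP ρl ρr ρ).mp hρ
    exact ⟨hC, hP, hPC, hCP, LinearMap.eq_rTensor_inl_comp_add_rTensor_inr_comp ρ⟩
  · rw [isLeftComodule_dorrohComul_iff, LinearMap.rTensor_fst_comp_inl_add_inr,
      LinearMap.rTensor_snd_comp_inl_add_inr]
    exact ⟨hC, hP, hPC, hCP⟩

/-- **Proposition 2.12 (left comodules over `C ⋉_d P`).** A vector space `M` is a left
`C ⋉_d P`-comodule iff it is simultaneously a left `C`-comodule and a left `P`-comodule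
satisfying `(id⊗ρ_l^C)ρ_l^P = (ρ_r⊗id)ρ_l^P` and `(id⊗ρ_l^P)ρ_l^C = (ρ_l⊗id)ρ_l^P`;
the correspondence is `ρ(m) = Σ (m₍₋₁₎,0)⊗m₍₀₎ + Σ (0,m₍₋₁₎')⊗m₍₀₎'`. -/
theorem dorroh_left_comodule {M : Type} [AddCommGroup M] [Module k M]
    (ΔC : C →ₗ[k] C ⊗[k] C) (ΔP : P →ₗ[k] P ⊗[k] P)
    (ρl : P →ₗ[k] C ⊗[k] P) (ρr : P →ₗ[k] P ⊗[k] C)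
    (h : IsDorrohPairC ΔC ΔP ρl ρr) :
    (∀ ρ : M →ₗ[k] (C × P) ⊗[k] M,
      IsLeftComodule (dorrohComul ΔC ΔP ρl ρr) ρ →
        IsLeftComodule ΔC ((LinearMap.fst k C P).rTensor M ∘ₗ ρ) ∧
        IsLeftComodule ΔP ((LinearMap.snd k C P).rTensor M ∘ₗ ρ) ∧
        (((LinearMap.fst k C P).rTensor M ∘ₗ ρ).lTensor P ∘ₗ
            ((LinearMap.snd k C P).rTensor M ∘ₗ ρ) =
          (TensorProduct.assoc k P C M).toLinearMap ∘ₗ ρr.rTensor M ∘ₗ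
            ((LinearMap.snd k C P).rTensor M ∘ₗ ρ)) ∧
        (((LinearMap.snd k C P).rTensor M ∘ₗ ρ).lTensor C ∘ₗ
            ((LinearMap.fst k C P).rTensor M ∘ₗ ρ) =
          (TensorProduct.assoc k C P M).toLinearMap ∘ₗ ρl.rTensor M ∘ₗ
            ((LinearMap.snd k C P).rTensor M ∘ₗ ρ)) ∧
        ρ = (LinearMap.inl k C P).rTensor M ∘ₗ ((LinearMap.fst k C P).rTensor M ∘ₗ ρ) +
            (LinearMap.inr k C P).rTensor M ∘ₗ ((LinearMap.snd k C P).rTensor M ∘ₗ ρ)) ∧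
    (∀ (ρC : M →ₗ[k] C ⊗[k] M) (ρP : M →ₗ[k] P ⊗[k] M),
      IsLeftComodule ΔC ρC →
      IsLeftComodule ΔP ρP →
      (ρC.lTensor P ∘ₗ ρP =
        (TensorProduct.assoc k P C M).toLinearMap ∘ₗ ρr.rTensor M ∘ₗ ρP) →
      (ρP.lTensor C ∘ₗ ρC =
        (TensorProduct.assoc k C P M).toLinearMap ∘ₗ ρl.rTensor M ∘ₗ ρP) →
      IsLeftComodule (dorrohComul ΔC ΔP ρl ρr)
        ((LinearMap.inl k C P).rTensor M ∘ₗ ρC + (LinearMap.inr k C P).rTensor M ∘ₗ ρP)) :=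
  dorroh_left_comodule_general ΔC ΔP ρl ρr

end
end

section
/- Let A be an associative algebra (not necessarily unital) over a field k, M a right A-module, and f ∈ M*. The following are equivalent: (a) f(N) = 0 for some A-submodule N of M with dim_k(M/N) < ∞; (b) f(NA) = 0 for some A-submodule N of M with dim_k(M/N) < ∞; (c) f(ML) = 0 for some left ideal L of A of finite codimension; (d) the subspace A⇀f = span{a⇀f : a ∈ A} of M* is finite-dimensional, where (a⇀f)(x) = f(xa); (e) the subspace of A* spanned by the functionals f(x·−) : a ↦ f(xa), for x ∈ M, is finite-dimensional; (f) there exist finitely many f_i ∈ M* and g_i ∈ A* such that f(xa) = Σ f_i(x)g_i(a) for all x ∈ M, a ∈ A. -/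
section

variable {k A M : Type} [Field k]
  [NonUnitalRing A] [Module k A] [SMulCommClass k A A] [IsScalarTower k A A]
  [AddCommGroup M] [Module k M]

/-- Auxiliary: quotient by the kernel of a map into a finite-dimensional space is
finite-dimensional. -/
private lemma quot_ker_fd {E F : Type} [AddCommGroup E] [Module k E] [AddCommGroup F]
    [Module k F] [FiniteDimensional k F] (φ : E →ₗ[k] F) :
    FiniteDimensional k (E ⧸ LinearMap.ker φ) :=
  LinearEquiv.finiteDimensional φ.quotKerEquivRange.symm

/-- Auxiliary: membership in the kernel of the evaluation map into the dual of a subspace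
of the dual. -/
private lemma evalRestrict_eq_zero_iff {E : Type} [AddCommGroup E] [Module k E]
    (W : Submodule k (Module.Dual k E)) (x : E) :
    (W.subtype.dualMap ∘ₗ Module.Dual.eval k E) x = 0 ↔ ∀ φ ∈ W, φ x = 0 := by
  constructor
  · intro h φ hφ
    have := LinearMap.congr_fun h ⟨φ, hφ⟩
    simpa using this
  · intro h
    ext ⟨φ, hφ⟩
    simpa using h φ hφ

set_option synthInstance.maxHeartbeats 1000000 in
/-- **Proposition 3.4.** For a right `A`-module `M` (with `k`-bilinear associative action `μ`)
and `f ∈ M*`, the following are equivalent: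
(a) `f(N) = 0` for some submodule `N` of finite codimension;
(b) `f(NA) = 0` for some submodule `N` of finite codimension;
(c) `f(ML) = 0` for some left ideal `L` of `A` of finite codimension;
(d) `dim (A ⇀ f) < ∞`;
(e) `dim ((−⇀f)(M)) < ∞`;
(f) `ρ_r(f) ∈ M* ⊗ A*`. -/
theorem module_finite_dual_tfae
    (μ : M →ₗ[k] A →ₗ[k] M)
    (hμ : ∀ (x : M) (a b : A), μ (μ x a) b = μ x (a * b))
    (f : Module.Dual k M) :
    List.TFAE
      [ ∃ N : Submodule k M, (∀ x ∈ N, ∀ a : A, μ x a ∈ N) ∧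
          FiniteDimensional k (M ⧸ N) ∧ ∀ x ∈ N, f x = 0,
        ∃ N : Submodule k M, (∀ x ∈ N, ∀ a : A, μ x a ∈ N) ∧
          FiniteDimensional k (M ⧸ N) ∧ ∀ x ∈ N, ∀ a : A, f (μ x a) = 0,
        ∃ L : Submodule k A, (∀ a ∈ L, ∀ b : A, b * a ∈ L) ∧
          FiniteDimensional k (A ⧸ L) ∧ ∀ x : M, ∀ a ∈ L, f (μ x a) = 0,
        FiniteDimensional k
          ↥(Submodule.span k (Set.range fun a : A => f ∘ₗ μ.flip a)),
        FiniteDimensional k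
          ↥(Submodule.span k (Set.range fun x : M => f ∘ₗ μ x)),
        ∃ (n : ℕ) (g : Fin n → Module.Dual k M) (h : Fin n → Module.Dual k A),
          ∀ (x : M) (a : A), f (μ x a) = ∑ i, g i x * h i a ] := by
  tfae_have 1 → 2 := by
    rintro ⟨N, hstab, hfd, hz⟩
    exact ⟨N, hstab, hfd, fun x hx a => hz _ (hstab x hx a)⟩
  tfae_have 2 → 4 := by
    rintro ⟨N, hstab, hfd, hz⟩
    haveI : FiniteDimensional k N.dualAnnihilator :=
      LinearEquiv.finiteDimensional N.dualQuotEquivDualAnnihilator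
    refine Submodule.finiteDimensional_of_le (S₂ := N.dualAnnihilator) ?_
    rw [Submodule.span_le]
    rintro _ ⟨a, rfl⟩
    rw [SetLike.mem_coe, Submodule.mem_dualAnnihilator]
    intro x hx
    exact hz x hx a
  tfae_have 4 → 6 := by
    intro hfd
    set W := Submodule.span k (Set.range fun a : A => f ∘ₗ μ.flip a) with hW
    haveI : FiniteDimensional k W := hfd
    haveI : Module.Free k W := Module.Free.of_divisionRing k W
    set T : A →ₗ[k] Module.Dual k M := (LinearMap.llcomp k M M k f) ∘ₗ μ.flip with hT
    have hTW : ∀ a, T a ∈ W := fun a => Submodule.subset_span ⟨a, rfl⟩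
    set T' : A →ₗ[k] W := T.codRestrict W hTW with hT'
    let b := Module.finBasis k W
    refine ⟨Module.finrank k W, fun i => ((b i : W) : Module.Dual k M),
      fun i => (b.coord i) ∘ₗ T', fun x a => ?_⟩
    have h1 : f (μ x a) = ((T' a : W) : Module.Dual k M) x := rfl
    rw [h1]
    conv_lhs => rw [← Module.Basis.sum_repr b (T' a)]
    simp only [Submodule.coe_sum, Submodule.coe_smul, LinearMap.sum_apply,
      LinearMap.smul_apply, smul_eq_mul]
    refine Finset.sum_congr rfl fun i _ => ?_
    rw [mul_comm]
    rfl
  tfae_have 5 → 6 := by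
    intro hfd
    set V := Submodule.span k (Set.range fun x : M => f ∘ₗ μ x) with hV
    haveI : FiniteDimensional k V := hfd
    haveI : Module.Free k V := Module.Free.of_divisionRing k V
    set T : M →ₗ[k] Module.Dual k A := (LinearMap.llcomp k A M k f) ∘ₗ μ with hT
    have hTV : ∀ x, T x ∈ V := fun x => Submodule.subset_span ⟨x, rfl⟩
    set T' : M →ₗ[k] V := T.codRestrict V hTV with hT'
    let b := Module.finBasis k V
    refine ⟨Module.finrank k V, fun i => (b.coord i) ∘ₗ T',
      fun i => ((b i : V) : Module.Dual k A), fun x a => ?_⟩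
    have h1 : f (μ x a) = ((T' x : V) : Module.Dual k A) a := rfl
    rw [h1]
    conv_lhs => rw [← Module.Basis.sum_repr b (T' x)]
    simp only [Submodule.coe_sum, Submodule.coe_smul, LinearMap.sum_apply,
      LinearMap.smul_apply, smul_eq_mul]
    exact Finset.sum_congr rfl fun i _ => rfl
  tfae_have 6 → 5 := by
    rintro ⟨n, g, h, hgh⟩
    haveI : FiniteDimensional k (Submodule.span k (Set.range h)) :=
      FiniteDimensional.span_of_finite k (Set.finite_range h)
    refine Submodule.finiteDimensional_of_le (S₂ := Submodule.span k (Set.range h)) ?_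
    rw [Submodule.span_le]
    rintro _ ⟨x, rfl⟩
    show f ∘ₗ μ x ∈ _
    have : f ∘ₗ μ x = ∑ i, g i x • h i := by
      ext a
      simpa using hgh x a
    rw [this]
    exact Submodule.sum_mem _ fun i _ =>
      Submodule.smul_mem _ _ (Submodule.subset_span ⟨i, rfl⟩)
  tfae_have 6 → 4 := by
    rintro ⟨n, g, h, hgh⟩
    haveI : FiniteDimensional k (Submodule.span k (Set.range g)) :=
      FiniteDimensional.span_of_finite k (Set.finite_range g)
    refine Submodule.finiteDimensional_of_le (S₂ := Submodule.span k (Set.range g)) ?_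
    rw [Submodule.span_le]
    rintro _ ⟨a, rfl⟩
    show f ∘ₗ μ.flip a ∈ _
    have : f ∘ₗ μ.flip a = ∑ i, h i a • g i := by
      ext x
      simp only [LinearMap.coe_comp, Function.comp_apply, LinearMap.flip_apply,
        LinearMap.sum_apply, LinearMap.smul_apply, smul_eq_mul]
      rw [hgh x a]
      exact Finset.sum_congr rfl fun i _ => mul_comm _ _
    rw [this]
    exact Submodule.sum_mem _ fun i _ =>
      Submodule.smul_mem _ _ (Submodule.subset_span ⟨i, rfl⟩)
  tfae_have 5 → 3 := by
    intro hfd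
    set V := Submodule.span k (Set.range fun x : M => f ∘ₗ μ x) with hV
    haveI : FiniteDimensional k V := hfd
    haveI : Module.Free k V := Module.Free.of_divisionRing k V
    haveI : FiniteDimensional k (Module.Dual k V) := Module.Finite.linearMap k k V k
    set Φ : A →ₗ[k] Module.Dual k V := V.subtype.dualMap ∘ₗ Module.Dual.eval k A with hΦ
    have hmem : ∀ a : A, a ∈ LinearMap.ker Φ ↔ ∀ φ ∈ V, φ a = 0 := fun a =>
      (LinearMap.mem_ker).trans (evalRestrict_eq_zero_iff V a)
    refine ⟨LinearMap.ker Φ, ?_, quot_ker_fd Φ, ?_⟩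
    · intro a ha b
      rw [hmem] at ha ⊢
      intro φ hφ
      induction hφ using Submodule.span_induction with
      | mem φ hφ =>
        obtain ⟨x, rfl⟩ := hφ
        have : f (μ x (b * a)) = f (μ (μ x b) a) := by rw [hμ]
        simpa [this] using ha (f ∘ₗ μ (μ x b)) (Submodule.subset_span ⟨μ x b, rfl⟩)
      | zero => simp
      | add φ ψ _ _ h1 h2 => simp [h1, h2]
      | smul c φ _ h1 => simp [h1]
    · intro x a ha
      rw [hmem] at ha
      exact ha (f ∘ₗ μ x) (Submodule.subset_span ⟨x, rfl⟩)
  tfae_have 3 → 5 := by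
    rintro ⟨L, hideal, hfd, hz⟩
    haveI : FiniteDimensional k L.dualAnnihilator :=
      LinearEquiv.finiteDimensional L.dualQuotEquivDualAnnihilator
    refine Submodule.finiteDimensional_of_le (S₂ := L.dualAnnihilator) ?_
    rw [Submodule.span_le]
    rintro _ ⟨x, rfl⟩
    rw [SetLike.mem_coe, Submodule.mem_dualAnnihilator]
    intro a ha
    exact hz x a ha
  tfae_have 4 → 1 := by
    intro hfd
    set W := Submodule.span k (Set.range fun a : A => f ∘ₗ μ.flip a) with hW
    haveI : FiniteDimensional k W := hfd
    haveI : Module.Free k W := Module.Free.of_divisionRing k W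
    haveI : FiniteDimensional k (Module.Dual k W) := Module.Finite.linearMap k k W k
    set Ψ : M →ₗ[k] Module.Dual k W := W.subtype.dualMap ∘ₗ Module.Dual.eval k M with hΨ
    set Θ : M →ₗ[k] k × Module.Dual k W := f.prod Ψ with hΘ
    have hker : LinearMap.ker Θ = LinearMap.ker f ⊓ LinearMap.ker Ψ := LinearMap.ker_prod f Ψ
    have hmemΨ : ∀ x : M, x ∈ LinearMap.ker Ψ ↔ ∀ φ ∈ W, φ x = 0 := fun x =>
      (LinearMap.mem_ker).trans (evalRestrict_eq_zero_iff W x)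
    refine ⟨LinearMap.ker Θ, ?_, quot_ker_fd Θ, ?_⟩
    · intro x hx a
      rw [hker, Submodule.mem_inf] at hx ⊢
      obtain ⟨hxf, hxΨ⟩ := hx
      rw [hmemΨ] at hxΨ
      constructor
      · rw [LinearMap.mem_ker]
        exact hxΨ (f ∘ₗ μ.flip a) (Submodule.subset_span ⟨a, rfl⟩)
      · rw [hmemΨ]
        intro φ hφ
        induction hφ using Submodule.span_induction with
        | mem φ hφ =>
          obtain ⟨b, rfl⟩ := hφ
          have : f (μ (μ x a) b) = f (μ x (a * b)) := by rw [hμ]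
          simpa [this] using hxΨ (f ∘ₗ μ.flip (a * b)) (Submodule.subset_span ⟨a * b, rfl⟩)
        | zero => simp
        | add φ ψ _ _ h1 h2 => simp [h1, h2]
        | smul c φ _ h1 => simp [h1]
    · intro x hx
      rw [hker, Submodule.mem_inf] at hx
      exact hx.1
  tfae_finish

end
end

section
/- Let A be an associative algebra (not necessarily unital) over a field k and M a right A-module. Let M_r° = { f ∈ M* : f vanishes on some A-submodule of M of finite codimension } and A° = { f ∈ A* : f vanishes on some right ideal of A of finite codimension }. Then for every f ∈ M_r° there exist finitely many f_i ∈ M_r° and g_i ∈ A° with f(xa) = Σ f_i(x)g_i(a) for all x ∈ M, a ∈ A; thus the dual ρ_r of the action map restricts to ρ_r : M_r° → M_r°⊗A°, and (M_r°, ρ_r) is a right comodule over the coalgebra (A°, m*), i.e. (id⊗m*)ρ_r = (ρ_r⊗id)ρ_r on M_r°. -/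
/-!
Let `f` vanish on an invariant subspace `N` of finite codimension, and lift a basis `b_j` of
`M ⧸ N` to elements `m_j`. Since `f (x a)` depends on `x` only modulo `N`, expanding `x mod N` in
the basis gives `f (x a) = Σ b_j^*(x mod N) f (m_j a)`. The coefficients `b_j^* ∘ mkQ` vanish on
`N`, and `f (m_j ·)` vanishes on the right ideal `{c | m_j c ∈ N}`, whose codimension is at most
`dim (M ⧸ N)`. Coassociativity is associativity of the action.
-/

section

variable {k : Type} [Field k]

/-- The finite dual `A°` of a (not necessarily unital) algebra `A`. -/
def finDual (k : Type) [Field k] (A : Type) [NonUnitalRing A] [Module k A]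
    [SMulCommClass k A A] [IsScalarTower k A A] : Set (Module.Dual k A) :=
  {f | ∃ R : Submodule k A, (∀ x ∈ R, ∀ a : A, x * a ∈ R) ∧
        FiniteDimensional k (A ⧸ R) ∧ ∀ x ∈ R, f x = 0}

/-- The finite dual `M_r°` of a right `A`-module `M` with action `μ`. -/
def finDualModR {A M : Type} [NonUnitalRing A] [Module k A]
    [SMulCommClass k A A] [IsScalarTower k A A] [AddCommGroup M] [Module k M]
    (μ : M →ₗ[k] A →ₗ[k] M) : Set (Module.Dual k M) :=
  {f | ∃ N : Submodule k M, (∀ x ∈ N, ∀ a : A, μ x a ∈ N) ∧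
        FiniteDimensional k (M ⧸ N) ∧ ∀ x ∈ N, f x = 0}

theorem Submodule.finiteDimensional_quotient_comap {V W : Type*} [AddCommGroup V] [Module k V]
    [AddCommGroup W] [Module k W] (φ : V →ₗ[k] W) (N : Submodule k W)
    [FiniteDimensional k (W ⧸ N)] : FiniteDimensional k (V ⧸ N.comap φ) :=
  FiniteDimensional.of_injective ((N.comap φ).mapQ N φ le_rfl) <| by
    rw [← LinearMap.ker_eq_bot, Submodule.ker_mapQ, Submodule.mkQ_map_self]

theorem Submodule.apply_eq_sum_repr_mkQ_smul {R V W ι : Type*} [Ring R] [AddCommGroup V]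
    [Module R V] [AddCommGroup W] [Module R W] [Fintype ι] {N : Submodule R V}
    (b : Module.Basis ι R (V ⧸ N)) {m : ι → V} (hm : ∀ i, N.mkQ (m i) = b i)
    (φ : V →ₗ[R] W) (hφ : N ≤ LinearMap.ker φ) (x : V) :
    φ x = ∑ i, b.repr (N.mkQ x) i • φ (m i) := by
  have hfactor : ∀ y, N.liftQ φ hφ (N.mkQ y) = φ y := fun y => rfl
  conv_lhs => rw [← hfactor, ← b.sum_repr (N.mkQ x)]
  simp only [map_sum, map_smul, ← hm, hfactor]

section RightModule

variable {A M : Type} [NonUnitalRing A] [Module k A] [SMulCommClass k A A]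
  [IsScalarTower k A A] [AddCommGroup M] [Module k M] {μ : M →ₗ[k] A →ₗ[k] M}
  {N : Submodule k M}

theorem comp_mkQ_mem_finDualModR (hN : ∀ x ∈ N, ∀ a : A, μ x a ∈ N)
    [FiniteDimensional k (M ⧸ N)] (g : Module.Dual k (M ⧸ N)) :
    g ∘ₗ N.mkQ ∈ finDualModR μ :=
  ⟨N, hN, inferInstance, fun x hx => by simp [(Submodule.Quotient.mk_eq_zero N).mpr hx]⟩

theorem comp_action_mem_finDual (hμ : ∀ (x : M) (a b : A), μ (μ x a) b = μ x (a * b))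
    (hN : ∀ x ∈ N, ∀ a : A, μ x a ∈ N) [FiniteDimensional k (M ⧸ N)]
    {f : Module.Dual k M} (hf : ∀ x ∈ N, f x = 0) (m : M) :
    f ∘ₗ μ m ∈ finDual k A :=
  ⟨N.comap (μ m), fun c hc a => by simpa [← hμ] using hN _ hc a,
    N.finiteDimensional_quotient_comap (μ m), fun c hc => hf _ hc⟩

end RightModule

/-- **Proposition 3.5.** For every `f ∈ M_r°` there are finitely many `f_i ∈ M_r°` and
`g_i ∈ A°` with `f(xa) = Σ f_i(x) g_i(a)` (i.e. `ρ_r(M_r°) ⊆ M_r° ⊗ A°`); moreover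
`(M_r°, ρ_r)` is a right `A°`-comodule: `(id ⊗ m*) ρ_r = (ρ_r ⊗ id) ρ_r`. -/
theorem finDualModR_comodule {A M : Type} [NonUnitalRing A] [Module k A]
    [SMulCommClass k A A] [IsScalarTower k A A] [AddCommGroup M] [Module k M]
    (μ : M →ₗ[k] A →ₗ[k] M)
    (hμ : ∀ (x : M) (a b : A), μ (μ x a) b = μ x (a * b))
    (f : Module.Dual k M) (hf : f ∈ finDualModR μ) :
    (∃ (n : ℕ) (g : Fin n → Module.Dual k M) (h : Fin n → Module.Dual k A),
      (∀ i, g i ∈ finDualModR μ ∧ h i ∈ finDual k A) ∧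
      ∀ (x : M) (a : A), f (μ x a) = ∑ i, g i x * h i a) ∧
    ∀ (x : M) (a b : A), f (μ x (a * b)) = f (μ (μ x a) b) := by
  obtain ⟨N, hN, hfin, hfN⟩ := hf
  refine ⟨?_, fun x a b => by rw [hμ]⟩
  let b := Module.finBasis k (M ⧸ N)
  choose m hm using fun j => N.mkQ_surjective (b j)
  have hvanish : N ≤ LinearMap.ker (μ.compr₂ f) := fun x hx =>
    LinearMap.ext fun a => hfN _ (hN x hx a)
  refine ⟨_, fun j => b.coord j ∘ₗ N.mkQ, fun j => f ∘ₗ μ (m j),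
    fun j => ⟨comp_mkQ_mem_finDualModR hN _, comp_action_mem_finDual hμ hN hfN (m j)⟩,
    fun x a => ?_⟩
  have hexpand := LinearMap.congr_fun (N.apply_eq_sum_repr_mkQ_smul b hm _ hvanish x) a
  simpa [LinearMap.sum_apply] using hexpand

end
end

section
/- Let (C, P) be a Dorroh pair of coalgebras over a field k. Then (C*, P*) is a Dorroh pair of algebras, where C* carries the convolution product (fg)(c) = Σ f(c₁)g(c₂), P* carries the convolution product from Δ_P, and the C*-bimodule actions on P* are (f·η)(p) = Σ f(p₍₋₁₎)η(p₍₀₎) and (η·f)(p) = Σ η(p₍₀₎)f(p₍₁₎) for f ∈ C*, η ∈ P*. Moreover the map F : C*⋉_d P* → (C⋉_d P)* defined by F(f,g)(c,p) = f(c) + g(p) is an algebra isomorphism onto the dual algebra of the coalgebra C⋉_d P. -/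
open TensorProduct

section

variable {k : Type} [Field k] {C P : Type}
  [AddCommGroup C] [Module k C] [AddCommGroup P] [Module k P]

/-- The convolution product on the dual space of a (not necessarily counital) coalgebra:
`(fg)(c) = Σ f(c₁) g(c₂)`. -/
noncomputable def conv {C : Type} [AddCommGroup C] [Module k C]
    (Δ : C →ₗ[k] C ⊗[k] C) (f g : Module.Dual k C) : Module.Dual k C :=
  (TensorProduct.lid k k).toLinearMap ∘ₗ TensorProduct.map f g ∘ₗ Δ

/-- The left action of `C*` on `P*`: `(f·η)(p) = Σ f(p₍₋₁₎) η(p₍₀₎)`. -/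
noncomputable def dualActL (ρl : P →ₗ[k] C ⊗[k] P)
    (f : Module.Dual k C) (η : Module.Dual k P) : Module.Dual k P :=
  (TensorProduct.lid k k).toLinearMap ∘ₗ TensorProduct.map f η ∘ₗ ρl

/-- The right action of `C*` on `P*`: `(η·f)(p) = Σ η(p₍₀₎) f(p₍₁₎)`. -/
noncomputable def dualActR (ρr : P →ₗ[k] P ⊗[k] C)
    (η : Module.Dual k P) (f : Module.Dual k C) : Module.Dual k P :=
  (TensorProduct.lid k k).toLinearMap ∘ₗ TensorProduct.map η f ∘ₗ ρr

/-!
Every product and action in sight is a contraction `x ↦ Σ f(x₁) g(x₂)` of two functionals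
along a structure map `δ x = Σ x₁ ⊗ x₂`. Transposing an identity `(w ⊗ id) δ = (id ⊗ w') δ'`
(up to the associator) gives `(f g) h = f (g h)` for the corresponding contractions, so each of
the eight axioms of a Dorroh pair of algebras for `(C*, P*)` is the transpose of one of the eight
axioms of `(C, P)`. The map `F` is the canonical isomorphism `C* × P* ≅ (C × P)*`, and the four
summands of the Dorroh comultiplication contract to the four summands of the Dorroh product.
-/

section Contraction

variable {R : Type*} [CommSemiring R] {X Y A B D : Type*}
  [AddCommMonoid X] [Module R X] [AddCommMonoid Y] [Module R Y]
  [AddCommMonoid A] [Module R A] [AddCommMonoid B] [Module R B] [AddCommMonoid D] [Module R D]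

/-- `x ↦ Σ f(x₁) g(x₂)` where `δ x = Σ x₁ ⊗ x₂`. -/
noncomputable def contract (f : Module.Dual R A) (g : Module.Dual R B) (δ : X →ₗ[R] A ⊗[R] B) :
    Module.Dual R X :=
  (TensorProduct.lid R R).toLinearMap ∘ₗ TensorProduct.map f g ∘ₗ δ

theorem contract_map (f : Module.Dual R A) (g : Module.Dual R B) (i : Y →ₗ[R] A)
    (j : D →ₗ[R] B) (δ : X →ₗ[R] Y ⊗[R] D) :
    contract f g (TensorProduct.map i j ∘ₗ δ) = contract (f ∘ₗ i) (g ∘ₗ j) δ := by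
  simp only [contract, ← LinearMap.comp_assoc, TensorProduct.map_comp]

theorem contract_comp (f : Module.Dual R A) (g : Module.Dual R B) (δ : Y →ₗ[R] A ⊗[R] B)
    (φ : X →ₗ[R] Y) : contract f g (δ ∘ₗ φ) = contract f g δ ∘ₗ φ :=
  rfl

theorem contract_add (f : Module.Dual R A) (g : Module.Dual R B) (δ δ' : X →ₗ[R] A ⊗[R] B) :
    contract f g (δ + δ') = contract f g δ + contract f g δ' := by
  simp only [contract, LinearMap.comp_add]

theorem contract_contract_left (f : Module.Dual R A) (g : Module.Dual R B)
    (w : Y →ₗ[R] A ⊗[R] B) (h : Module.Dual R D) (δ : X →ₗ[R] Y ⊗[R] D) :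
    contract (contract f g w) h δ = contract (contract f g .id) h .id ∘ₗ w.rTensor D ∘ₗ δ := by
  rw [LinearMap.rTensor, ← contract_comp, LinearMap.id_comp, contract_map]
  rfl

theorem contract_contract_right (h : Module.Dual R D) (f : Module.Dual R A)
    (g : Module.Dual R B) (w : Y →ₗ[R] A ⊗[R] B) (δ : X →ₗ[R] D ⊗[R] Y) :
    contract h (contract f g w) δ = contract h (contract f g .id) .id ∘ₗ w.lTensor D ∘ₗ δ := by
  rw [LinearMap.lTensor, ← contract_comp, LinearMap.id_comp, contract_map]
  rfl

theorem contract_contract_id_eq_comp_assoc (f : Module.Dual R A) (g : Module.Dual R B)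
    (h : Module.Dual R D) :
    contract (contract f g .id) h .id =
      contract f (contract g h .id) .id ∘ₗ (TensorProduct.assoc R A B D).toLinearMap := by
  ext a b d
  simp [contract, mul_assoc]

theorem contract_assoc {Z : Type*} [AddCommMonoid Z] [Module R Z] {w : Y →ₗ[R] A ⊗[R] B}
    {w' : Z →ₗ[R] B ⊗[R] D} {δ : X →ₗ[R] Y ⊗[R] D} {δ' : X →ₗ[R] A ⊗[R] Z}
    (hδ : (TensorProduct.assoc R A B D).toLinearMap ∘ₗ w.rTensor D ∘ₗ δ = w'.lTensor A ∘ₗ δ')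
    (f : Module.Dual R A) (g : Module.Dual R B) (h : Module.Dual R D) :
    contract (contract f g w) h δ = contract f (contract g h w') δ' := by
  rw [contract_contract_left, contract_contract_right, ← hδ, contract_contract_id_eq_comp_assoc]
  rfl

end Contraction

theorem conv_eq_contract {C : Type} [AddCommGroup C] [Module k C] (Δ : C →ₗ[k] C ⊗[k] C)
    (f g : Module.Dual k C) : conv Δ f g = contract f g Δ :=
  rfl

theorem dualActL_eq_contract (ρl : P →ₗ[k] C ⊗[k] P) (f : Module.Dual k C)
    (η : Module.Dual k P) : dualActL ρl f η = contract f η ρl :=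
  rfl

theorem dualActR_eq_contract (ρr : P →ₗ[k] P ⊗[k] C) (η : Module.Dual k P)
    (f : Module.Dual k C) : dualActR ρr η f = contract η f ρr :=
  rfl

theorem conv_dorrohComul_coprod (ΔC : C →ₗ[k] C ⊗[k] C) (ΔP : P →ₗ[k] P ⊗[k] P)
    (ρl : P →ₗ[k] C ⊗[k] P) (ρr : P →ₗ[k] P ⊗[k] C) (f g : Module.Dual k C)
    (η θ : Module.Dual k P) :
    conv (dorrohComul ΔC ΔP ρl ρr) (f.coprod η) (g.coprod θ) =
      (conv ΔC f g).coprod (dualActL ρl f θ + dualActR ρr η g + conv ΔP η θ) := by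
  simp only [conv_eq_contract, dualActL_eq_contract, dualActR_eq_contract, dorrohComul,
    contract_add, contract_map, LinearMap.coprod_inl, LinearMap.coprod_inr]
  simp only [contract_comp, LinearMap.coprod, LinearMap.add_comp]
  abel

/-- **Theorem 3.12(b).** If `(C, P)` is a Dorroh pair of coalgebras, then `(C*, P*)` is a
Dorroh pair of algebras (with the convolution products and the dual actions), and
`F(f,g)(c,p) = f(c) + g(p)` is an algebra isomorphism `C* ⋉_d P* ≅ (C ⋉_d P)*`. -/
theorem dual_dorroh_pair (ΔC : C →ₗ[k] C ⊗[k] C) (ΔP : P →ₗ[k] P ⊗[k] P)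
    (ρl : P →ₗ[k] C ⊗[k] P) (ρr : P →ₗ[k] P ⊗[k] C)
    (h : IsDorrohPairC ΔC ΔP ρl ρr) :
    -- `C*` and `P*` are associative algebras under convolution
    (∀ f g h' : Module.Dual k C, conv ΔC (conv ΔC f g) h' = conv ΔC f (conv ΔC g h')) ∧
    (∀ η θ ξ : Module.Dual k P, conv ΔP (conv ΔP η θ) ξ = conv ΔP η (conv ΔP θ ξ)) ∧
    -- `P*` is a `C*`-bimodule
    (∀ (f g : Module.Dual k C) (η : Module.Dual k P),
      dualActL ρl (conv ΔC f g) η = dualActL ρl f (dualActL ρl g η)) ∧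
    (∀ (η : Module.Dual k P) (f g : Module.Dual k C),
      dualActR ρr (dualActR ρr η f) g = dualActR ρr η (conv ΔC f g)) ∧
    (∀ (f : Module.Dual k C) (η : Module.Dual k P) (g : Module.Dual k C),
      dualActR ρr (dualActL ρl f η) g = dualActL ρl f (dualActR ρr η g)) ∧
    -- the actions are compatible with the multiplication of `P*`
    (∀ (f : Module.Dual k C) (η θ : Module.Dual k P),
      dualActL ρl f (conv ΔP η θ) = conv ΔP (dualActL ρl f η) θ) ∧
    (∀ (η : Module.Dual k P) (f : Module.Dual k C) (θ : Module.Dual k P),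
      conv ΔP (dualActR ρr η f) θ = conv ΔP η (dualActL ρl f θ)) ∧
    (∀ (η θ : Module.Dual k P) (f : Module.Dual k C),
      dualActR ρr (conv ΔP η θ) f = conv ΔP η (dualActR ρr θ f)) ∧
    -- `F` is an algebra isomorphism `C* ⋉_d P* ≅ (C ⋉_d P)*`
    Function.Bijective
      ((LinearMap.fst k C P).dualMap.coprod (LinearMap.snd k C P).dualMap) ∧
    ∀ u v : Module.Dual k C × Module.Dual k P,
      ((LinearMap.fst k C P).dualMap.coprod (LinearMap.snd k C P).dualMap)
        (conv ΔC u.1 v.1,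
          dualActL ρl u.1 v.2 + dualActR ρr u.2 v.1 + conv ΔP u.2 v.2) =
      conv (dorrohComul ΔC ΔP ρl ρr)
        (((LinearMap.fst k C P).dualMap.coprod (LinearMap.snd k C P).dualMap) u)
        (((LinearMap.fst k C P).dualMap.coprod (LinearMap.snd k C P).dualMap) v) := by
  obtain ⟨hC, hP, hl, hr, hlr, hPr, hlP, hrl⟩ := h
  exact ⟨contract_assoc hC, contract_assoc hP, contract_assoc hl, contract_assoc hr.symm,
    contract_assoc hlr.symm, fun f η θ => (contract_assoc hlP f η θ).symm, contract_assoc hrl,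
    contract_assoc hPr.symm, (Module.dualProdDualEquivDual k C P).bijective,
    fun u v => (conv_dorrohComul_coprod ΔC ΔP ρl ρr u.1 v.1 u.2 v.2).symm⟩

end
end
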